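/- arXiv:2208.02538 — 5 statements merged into one kernel-verified Lean document; each statement's English description precedes it below -/
import Mathlib

section
/- For all positive integers n, the maximum number of copies of C_4 (cycles of length 4) in an n-vertex bipartite graph containing no cycle of length 6 is binom(n-2, 2). -/
open SimpleGraph Finset

/-- `Contains H G` : `G` contains a (not necessarily induced) subgraph copy of `H`. -/
def Contains {W V : Type*} (H : SimpleGraph W) (G : SimpleGraph V) : Prop :=
  ∃ f : H →g G, Function.Injective f

/-- Number of subgraphs of `G` isomorphic to `H`. -/
noncomputable def copyCount {W V : Type*} (H : SimpleGraph W) (G : SimpleGraph V) : ℕ :=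
  Set.ncard {G' : G.Subgraph | Nonempty (G'.coe ≃g H)}

lemma fin2_trans {a b c : Fin 2} (h1 : a ≠ b) (h2 : c ≠ b) : a = c := by omega
lemma fin2_cases (a : Fin 2) : a = 0 ∨ a = 1 := by omega

variable {n : ℕ}

section general
variable (G : SimpleGraph (Fin n)) (C : G.Coloring (Fin 2))

set_option maxHeartbeats 1000000 in
/-- Build a C6 copy from an explicit 6-cycle x1-y1-x2-y2-x3-y3-x1. -/
lemma containsC6_of (C : G.Coloring (Fin 2)) (x1 x2 x3 y1 y2 y3 : Fin n)
    (hx12 : x1 ≠ x2) (hx13 : x1 ≠ x3) (hx23 : x2 ≠ x3)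
    (hy12 : y1 ≠ y2) (hy13 : y1 ≠ y3) (hy23 : y2 ≠ y3)
    (e11 : G.Adj x1 y1) (e21 : G.Adj x2 y1) (e22 : G.Adj x2 y2)
    (e32 : G.Adj x3 y2) (e33 : G.Adj x3 y3) (e13 : G.Adj x1 y3) :
    Contains (cycleGraph 6) G := by
  have c21 : C x2 = C x1 := fin2_trans (C.valid e21) (C.valid e11)
  have c32 : C x3 = C x2 := fin2_trans (C.valid e32) (C.valid e22)
  have c31 : C x3 = C x1 := c32.trans c21
  have d11 : x1 ≠ y1 := fun h => C.valid e11 (congrArg C h)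
  have d12 : x1 ≠ y2 := fun h => C.valid e22 (c21.trans (congrArg C h))
  have d13 : x1 ≠ y3 := fun h => C.valid e13 (congrArg C h)
  have d21 : x2 ≠ y1 := fun h => C.valid e21 (congrArg C h)
  have d22 : x2 ≠ y2 := fun h => C.valid e22 (congrArg C h)
  have d23 : x2 ≠ y3 := fun h => C.valid e13 (c21.symm.trans (congrArg C h))
  have d31 : x3 ≠ y1 := fun h => C.valid e11 (c31.symm.trans (congrArg C h))
  have d32 : x3 ≠ y2 := fun h => C.valid e32 (congrArg C h)
  have d33 : x3 ≠ y3 := fun h => C.valid e33 (congrArg C h)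
  let f : Fin 6 → Fin n := fun i => match i with
    | ⟨0, _⟩ => x1 | ⟨1, _⟩ => y1 | ⟨2, _⟩ => x2
    | ⟨3, _⟩ => y2 | ⟨4, _⟩ => x3 | ⟨5, _⟩ => y3
  refine ⟨⟨f, ?_⟩, ?_⟩
  · intro i j hij
    fin_cases i <;> fin_cases j <;>
      first
        | exact absurd hij (by decide)
        | exact e11 | exact e11.symm | exact e21 | exact e21.symm
        | exact e22 | exact e22.symm | exact e32 | exact e32.symm
        | exact e33 | exact e33.symm | exact e13 | exact e13.symm
  · intro i j hij
    fin_cases i <;> fin_cases j <;>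
      first
        | rfl
        | exact absurd hij hx12 | exact absurd hij hx12.symm
        | exact absurd hij hx13 | exact absurd hij hx13.symm
        | exact absurd hij hx23 | exact absurd hij hx23.symm
        | exact absurd hij hy12 | exact absurd hij hy12.symm
        | exact absurd hij hy13 | exact absurd hij hy13.symm
        | exact absurd hij hy23 | exact absurd hij hy23.symm
        | exact absurd hij d11 | exact absurd hij d11.symm
        | exact absurd hij d12 | exact absurd hij d12.symm
        | exact absurd hij d13 | exact absurd hij d13.symm
        | exact absurd hij d21 | exact absurd hij d21.symm
        | exact absurd hij d22 | exact absurd hij d22.symm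
        | exact absurd hij d23 | exact absurd hij d23.symm
        | exact absurd hij d31 | exact absurd hij d31.symm
        | exact absurd hij d32 | exact absurd hij d32.symm
        | exact absurd hij d33 | exact absurd hij d33.symm

def IsQuad (S : Finset (Fin n)) : Prop :=
  (S.filter fun x => C x = 0).card = 2 ∧ (S.filter fun x => C x = 1).card = 2 ∧
    ∀ p ∈ S, ∀ q ∈ S, C p ≠ C q → G.Adj p q

variable {G C}

lemma quad_rep {S : Finset (Fin n)} (h : IsQuad G C S) : ∃ a c u v : Fin n,
    C a = 0 ∧ C c = 0 ∧ C u = 1 ∧ C v = 1 ∧ a ≠ c ∧ u ≠ v ∧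
    S.filter (fun x => C x = 0) = {a, c} ∧ S.filter (fun x => C x = 1) = {u, v} ∧
    S = {a, c, u, v} ∧ G.Adj a u ∧ G.Adj a v ∧ G.Adj c u ∧ G.Adj c v := by
  obtain ⟨a, c, hac, hD1⟩ := Finset.card_eq_two.1 h.1
  obtain ⟨u, v, huv, hD2⟩ := Finset.card_eq_two.1 h.2.1
  have haS : a ∈ S ∧ C a = 0 := by
    have := hD1 ▸ Finset.mem_insert_self a {c}; exact (Finset.mem_filter.1 this).imp id (·)
  have hcS : c ∈ S ∧ C c = 0 := by
    have : c ∈ S.filter (fun x => C x = 0) := by rw [hD1]; simp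
    exact (Finset.mem_filter.1 this).imp id (·)
  have huS : u ∈ S ∧ C u = 1 := by
    have : u ∈ S.filter (fun x => C x = 1) := by rw [hD2]; simp
    exact (Finset.mem_filter.1 this).imp id (·)
  have hvS : v ∈ S ∧ C v = 1 := by
    have : v ∈ S.filter (fun x => C x = 1) := by rw [hD2]; simp
    exact (Finset.mem_filter.1 this).imp id (·)
  refine ⟨a, c, u, v, haS.2, hcS.2, huS.2, hvS.2, hac, huv, hD1, hD2, ?_, ?_, ?_, ?_, ?_⟩
  · ext x
    constructor
    · intro hx
      rcases fin2_cases (C x) with h0 | h1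
      · have : x ∈ S.filter (fun x => C x = 0) := Finset.mem_filter.2 ⟨hx, h0⟩
        rw [hD1] at this; simp at this; rcases this with h | h <;> simp [h]
      · have : x ∈ S.filter (fun x => C x = 1) := Finset.mem_filter.2 ⟨hx, h1⟩
        rw [hD2] at this; simp at this; rcases this with h | h <;> simp [h]
    · intro hx
      simp only [Finset.mem_insert, Finset.mem_singleton] at hx
      rcases hx with h | h | h | h <;> subst h
      exacts [haS.1, hcS.1, huS.1, hvS.1]
  · exact h.2.2 a haS.1 u huS.1 (by rw [haS.2, huS.2]; decide)
  · exact h.2.2 a haS.1 v hvS.1 (by rw [haS.2, hvS.2]; decide)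
  · exact h.2.2 c hcS.1 u huS.1 (by rw [hcS.2, huS.2]; decide)
  · exact h.2.2 c hcS.1 v hvS.1 (by rw [hcS.2, hvS.2]; decide)

lemma quad_card {S : Finset (Fin n)} (h : IsQuad G C S) : S.card = 4 := by
  obtain ⟨a, c, u, v, ca, cc, cu, cv, hac, huv, -, -, hS, -⟩ := quad_rep h
  have hau : a ≠ u := fun h => by rw [h, cu] at ca; exact absurd ca (by decide)
  have hav : a ≠ v := fun h => by rw [h, cv] at ca; exact absurd ca (by decide)
  have hcu : c ≠ u := fun h => by rw [h, cu] at cc; exact absurd cc (by decide)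
  have hcv : c ≠ v := fun h => by rw [h, cv] at cc; exact absurd cc (by decide)
  rw [hS]
  rw [Finset.card_insert_of_notMem (by simp [hac, hau, hav]),
    Finset.card_insert_of_notMem (by simp [hcu, hcv]),
    Finset.card_insert_of_notMem (by simp [huv]), Finset.card_singleton]

variable (G C)

def quadSub (S : Finset (Fin n)) : G.Subgraph where
  verts := ↑S
  Adj p q := G.Adj p q ∧ p ∈ S ∧ q ∈ S
  adj_sub h := h.1
  edge_vert h := h.2.1
  symm := ⟨fun p q ⟨h, hp, hq⟩ => ⟨h.symm, hq, hp⟩⟩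

variable {G C}

set_option maxHeartbeats 1600000 in
lemma quadSub_iso {S : Finset (Fin n)} (h : IsQuad G C S) :
    Nonempty ((quadSub G S).coe ≃g cycleGraph 4) := by
  obtain ⟨a, c, u, v, ca, cc, cu, cv, hac, huv, -, -, hS, eau, eav, ecu, ecv⟩ := quad_rep h
  have hau : a ≠ u := fun h => by rw [h, cu] at ca; exact absurd ca (by decide)
  have hav : a ≠ v := fun h => by rw [h, cv] at ca; exact absurd ca (by decide)
  have hcu : c ≠ u := fun h => by rw [h, cu] at cc; exact absurd cc (by decide)
  have hcv : c ≠ v := fun h => by rw [h, cv] at cc; exact absurd cc (by decide)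
  have nac : ¬ G.Adj a c := fun h => C.valid h (ca.trans cc.symm)
  have nuv : ¬ G.Adj u v := fun h => C.valid h (cu.trans cv.symm)
  have haS : a ∈ S := by rw [hS]; simp
  have hcS : c ∈ S := by rw [hS]; simp
  have huS : u ∈ S := by rw [hS]; simp
  have hvS : v ∈ S := by rw [hS]; simp
  let f : Fin 4 → ↥((quadSub G S).verts) := fun i => match i with
    | ⟨0, _⟩ => ⟨a, haS⟩ | ⟨1, _⟩ => ⟨u, huS⟩ | ⟨2, _⟩ => ⟨c, hcS⟩ | ⟨3, _⟩ => ⟨v, hvS⟩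
  have hbij : Function.Bijective f := by
    constructor
    · intro i j hij
      fin_cases i <;> fin_cases j <;> first
        | rfl
        | (exfalso; have := Subtype.ext_iff.1 hij; simp only at this;
           first
            | exact hac this | exact hac this.symm
            | exact huv this | exact huv this.symm
            | exact hau this | exact hau this.symm
            | exact hav this | exact hav this.symm
            | exact hcu this | exact hcu this.symm
            | exact hcv this | exact hcv this.symm)
    · rintro ⟨x, hx⟩
      have : x ∈ S := hx
      rw [hS] at this
      simp only [Finset.mem_insert, Finset.mem_singleton] at this
      rcases this with h | h | h | h <;> subst h
      exacts [⟨0, rfl⟩, ⟨2, rfl⟩, ⟨1, rfl⟩, ⟨3, rfl⟩]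
  refine ⟨((⟨Equiv.ofBijective f hbij, ?_⟩ : cycleGraph 4 ≃g (quadSub G S).coe)).symm⟩
  intro i j
  rw [Equiv.ofBijective_apply, Equiv.ofBijective_apply]
  fin_cases i <;> fin_cases j <;>
    simp only [SimpleGraph.Subgraph.coe_adj] <;>
    first
      | (constructor
         · intro hadj; exact absurd hadj.1 (by
             first | exact G.irrefl | exact nac | exact (fun h => nac h.symm)
                   | exact nuv | exact (fun h => nuv h.symm))
         · intro hadj; exact absurd hadj (by decide))
      | (constructor
         · intro _; decide
         · intro _
           exact ⟨by first | exact eau | exact eau.symm | exact eav | exact eav.symm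
                           | exact ecu | exact ecu.symm | exact ecv | exact ecv.symm,
             by first | exact haS | exact hcS | exact huS | exact hvS,
             by first | exact haS | exact hcS | exact huS | exact hvS⟩)

set_option maxHeartbeats 1600000 in
lemma subgraph_eq_quadSub {G' : G.Subgraph} (h : Nonempty (G'.coe ≃g cycleGraph 4)) :
    ∃ S : Finset (Fin n), IsQuad G C S ∧ G' = quadSub G S := by
  classical
  obtain ⟨e⟩ := h
  set w : Fin 4 → Fin n := fun i => ↑(e.symm i) with hw
  have hwv : ∀ i, w i ∈ G'.verts := fun i => (e.symm i).2
  have hwinj : ∀ i j : Fin 4, i ≠ j → w i ≠ w j := by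
    intro i j hij hwij
    exact hij (e.symm.injective (Subtype.ext hwij))
  have hadj : ∀ i j : Fin 4, G'.Adj (w i) (w j) ↔ (cycleGraph 4).Adj i j := by
    intro i j
    rw [← SimpleGraph.Subgraph.coe_adj]
    exact e.symm.map_adj_iff
  have a01 : G'.Adj (w 0) (w 1) := (hadj 0 1).2 (by decide)
  have a12 : G'.Adj (w 1) (w 2) := (hadj 1 2).2 (by decide)
  have a23 : G'.Adj (w 2) (w 3) := (hadj 2 3).2 (by decide)
  have a30 : G'.Adj (w 3) (w 0) := (hadj 3 0).2 (by decide)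
  have c01 : C (w 0) ≠ C (w 1) := C.valid (G'.adj_sub a01)
  have c12 : C (w 1) ≠ C (w 2) := C.valid (G'.adj_sub a12)
  have c23 : C (w 2) ≠ C (w 3) := C.valid (G'.adj_sub a23)
  have c02 : C (w 0) = C (w 2) := fin2_trans c01 (Ne.symm c12)
  have c13 : C (w 1) = C (w 3) := fin2_trans c12 (Ne.symm c23)
  set S : Finset (Fin n) := {w 0, w 1, w 2, w 3} with hSdef
  have hmemS : ∀ x, x ∈ S ↔ x = w 0 ∨ x = w 1 ∨ x = w 2 ∨ x = w 3 := by
    intro x; simp [hSdef]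
  have hSv : G'.verts = ↑S := by
    ext x
    constructor
    · intro hx
      have hxw : x = w (e ⟨x, hx⟩) := by simp [hw]
      have : x ∈ S := by
        rw [hmemS]
        generalize e ⟨x, hx⟩ = i at hxw
        fin_cases i
        · exact Or.inl hxw
        · exact Or.inr (Or.inl hxw)
        · exact Or.inr (Or.inr (Or.inl hxw))
        · exact Or.inr (Or.inr (Or.inr hxw))
      exact this
    · intro hx
      have := (hmemS x).1 hx
      rcases this with h | h | h | h <;> subst h <;> exact hwv _
  have key : ∀ p ∈ S, ∀ q ∈ S, C p ≠ C q → G'.Adj p q := by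
    intro p hp q hq hpq
    rw [hmemS] at hp hq
    rcases hp with h | h | h | h <;> subst h <;>
      rcases hq with h | h | h | h <;> subst h <;>
      first
        | exact absurd rfl hpq
        | exact absurd c02 hpq
        | exact absurd c02.symm hpq
        | exact absurd c13 hpq
        | exact absurd c13.symm hpq
        | exact a01 | exact a01.symm | exact a12 | exact a12.symm
        | exact a23 | exact a23.symm | exact a30 | exact a30.symm
  have hfilter : ∀ t : Fin 2, S.filter (fun x => C x = t) =
      if C (w 0) = t then {w 0, w 2} else {w 1, w 3} := by
    intro t
    split_ifs with hct
    · have e1 : C (w 1) ≠ t := fun h => c01 (hct.trans h.symm)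
      have e3 : C (w 3) ≠ t := fun h => e1 (c13.trans h)
      have e2 : C (w 2) = t := c02.symm.trans hct
      ext x
      simp only [Finset.mem_filter, hmemS, Finset.mem_insert, Finset.mem_singleton]
      constructor
      · rintro ⟨(h | h | h | h), hx⟩ <;> subst h
        · exact Or.inl rfl
        · exact absurd hx e1
        · exact Or.inr rfl
        · exact absurd hx e3
      · rintro (h | h) <;> subst h
        · exact ⟨Or.inl rfl, hct⟩
        · exact ⟨Or.inr (Or.inr (Or.inl rfl)), e2⟩
    · have e1 : C (w 1) = t := fin2_trans (Ne.symm c01) (fun h => hct h.symm)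
      have e3 : C (w 3) = t := c13.symm.trans e1
      have e2 : C (w 2) ≠ t := fun h => hct (c02.trans h)
      ext x
      simp only [Finset.mem_filter, hmemS, Finset.mem_insert, Finset.mem_singleton]
      constructor
      · rintro ⟨(h | h | h | h), hx⟩ <;> subst h
        · exact absurd hx hct
        · exact Or.inl rfl
        · exact absurd hx e2
        · exact Or.inr rfl
      · rintro (h | h) <;> subst h
        · exact ⟨Or.inr (Or.inl rfl), e1⟩
        · exact ⟨Or.inr (Or.inr (Or.inr rfl)), e3⟩
  have hquad : IsQuad G C S := by
    refine ⟨?_, ?_, fun p hp q hq hpq => G'.adj_sub (key p hp q hq hpq)⟩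
    · rw [hfilter 0]
      split_ifs
      · exact Finset.card_pair (hwinj 0 2 (by decide))
      · exact Finset.card_pair (hwinj 1 3 (by decide))
    · rw [hfilter 1]
      split_ifs
      · exact Finset.card_pair (hwinj 0 2 (by decide))
      · exact Finset.card_pair (hwinj 1 3 (by decide))
  refine ⟨S, hquad, ?_⟩
  apply SimpleGraph.Subgraph.ext
  · exact hSv
  · funext p q
    apply propext
    constructor
    · intro hpq
      have hp : p ∈ G'.verts := G'.edge_vert hpq
      have hq : q ∈ G'.verts := G'.edge_vert (G'.symm.symm _ _ hpq)
      rw [hSv] at hp hq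
      exact ⟨G'.adj_sub hpq, hp, hq⟩
    · rintro ⟨hg, hp, hq⟩
      exact key p hp q hq (C.valid hg)

open scoped Classical in
lemma copyCount_eq : _root_.copyCount (cycleGraph 4) G =
    ((univ : Finset (Finset (Fin n))).filter (IsQuad G C)).card := by
  classical
  have hset : {G' : G.Subgraph | Nonempty (G'.coe ≃g cycleGraph 4)} =
      ↑(((univ : Finset (Finset (Fin n))).filter (IsQuad G C)).image (quadSub G)) := by
    ext G'
    simp only [Set.mem_setOf_eq, Finset.coe_image, Set.mem_image, Finset.mem_coe,
      Finset.mem_filter, Finset.mem_univ, true_and]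
    constructor
    · intro h
      obtain ⟨S, hS, hG'⟩ := subgraph_eq_quadSub (C := C) h
      exact ⟨S, hS, hG'.symm⟩
    · rintro ⟨S, hS, rfl⟩
      exact quadSub_iso hS
  rw [_root_.copyCount, hset, Set.ncard_coe_finset]
  apply Finset.card_image_of_injOn
  intro S hS S' hS' hquad
  have hv := congrArg SimpleGraph.Subgraph.verts hquad
  simpa [quadSub] using hv

end general


section construction

def K22g (n : ℕ) : SimpleGraph (Fin n) where
  Adj x y := (x.val < 2 ∧ ¬ y.val < 2) ∨ (y.val < 2 ∧ ¬ x.val < 2)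
  symm := by constructor; intro x y h; tauto
  loopless := by constructor; intro x h; tauto

def K22col : (K22g n).Coloring (Fin 2) :=
  SimpleGraph.Coloring.mk (fun v => if v.val < 2 then 0 else 1) (by
    intro v w h
    rcases h with ⟨h1, h2⟩ | ⟨h1, h2⟩ <;> simp [h1, h2])

lemma K22col_eq0 (x : Fin n) : K22col x = 0 ↔ x.val < 2 := by
  have h : K22col x = if x.val < 2 then 0 else 1 := rfl
  rw [h]; split_ifs with h' <;> simp [h']

lemma K22col_eq1 (x : Fin n) : K22col x = 1 ↔ ¬ x.val < 2 := by
  have h : K22col x = if x.val < 2 then 0 else 1 := rfl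
  rw [h]; split_ifs with h' <;> simp [h']

lemma K22_colorable : (K22g n).Colorable 2 := ⟨K22col⟩

lemma K22_C6free : ¬ Contains (cycleGraph 6) (K22g n) := by
  rintro ⟨f, hf⟩
  have hstep : ∀ i j : Fin 6, (cycleGraph 6).Adj i j →
      ((f i).val < 2 ↔ ¬ (f j).val < 2) := by
    intro i j h
    have hadj := f.map_rel h
    rcases hadj with ⟨h1, h2⟩ | ⟨h1, h2⟩
    · exact ⟨fun _ => h2, fun _ => h1⟩
    · exact ⟨fun hh => absurd hh h2, fun hh => absurd h1 hh⟩
  have h01 := hstep 0 1 (by decide)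
  have h12 := hstep 1 2 (by decide)
  have h23 := hstep 2 3 (by decide)
  have h34 := hstep 3 4 (by decide)
  have h45 := hstep 4 5 (by decide)
  have hne : ∀ i j : Fin 6, i ≠ j → (f i).val ≠ (f j).val := by
    intro i j hij hv
    exact hij (hf (Fin.ext hv))
  have n02 := hne 0 2 (by decide)
  have n04 := hne 0 4 (by decide)
  have n24 := hne 2 4 (by decide)
  have n13 := hne 1 3 (by decide)
  have n15 := hne 1 5 (by decide)
  have n35 := hne 3 5 (by decide)
  by_cases h : (f 0).val < 2
  · have b1 : ¬ (f 1).val < 2 := h01.1 h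
    have b2 : (f 2).val < 2 := by by_contra hh; exact hh (by tauto)
    have b3 : ¬ (f 3).val < 2 := h23.1 b2
    have b4 : (f 4).val < 2 := by by_contra hh; exact hh (by tauto)
    omega
  · have b1 : (f 1).val < 2 := by by_contra hh; exact h (h01.2 hh)
    have b2 : ¬ (f 2).val < 2 := h12.1 b1
    have b3 : (f 3).val < 2 := by by_contra hh; exact b2 (h23.2 hh)
    have b4 : ¬ (f 4).val < 2 := h34.1 b3
    have b5 : (f 5).val < 2 := by by_contra hh; exact b4 (h45.2 hh)
    omega

open scoped Classical in
lemma K22_quadcount (hn : 2 ≤ n) :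
    ((univ : Finset (Finset (Fin n))).filter (IsQuad (K22g n) K22col)).card
      = (n - 2).choose 2 := by
  classical
  set x0 : Fin n := ⟨0, by omega⟩ with hx0
  set x1 : Fin n := ⟨1, by omega⟩ with hx1
  have hx01 : x0 ≠ x1 := by simp [hx0, hx1, Fin.ext_iff]
  set hubs : Finset (Fin n) := univ.filter (fun v : Fin n => v.val < 2) with hhubs
  set nonhubs : Finset (Fin n) := univ.filter (fun v : Fin n => ¬ v.val < 2) with hnonhubs
  have hhubeq : hubs = {x0, x1} := by
    ext v
    simp only [hhubs, Finset.mem_filter, Finset.mem_univ, true_and, Finset.mem_insert,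
      Finset.mem_singleton]
    constructor
    · intro h
      rcases (by omega : v.val = 0 ∨ v.val = 1) with h' | h'
      · exact Or.inl (Fin.ext (by simp [hx0, h']))
      · exact Or.inr (Fin.ext (by simp [hx1, h']))
    · rintro (rfl | rfl) <;> simp [hx0, hx1]
  have hhubcard : hubs.card = 2 := by rw [hhubeq]; exact Finset.card_pair hx01
  have hnonhubcard : nonhubs.card = n - 2 := by
    have := Finset.card_filter_add_card_filter_not
      (s := (univ : Finset (Fin n))) (p := fun v : Fin n => v.val < 2)
    rw [Finset.card_univ, Fintype.card_fin] at this
    have h2 : hubs.card + nonhubs.card = n := this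
    omega
  have himg : (univ : Finset (Finset (Fin n))).filter (IsQuad (K22g n) K22col)
      = (nonhubs.powersetCard 2).image (fun T => insert x0 (insert x1 T)) := by
    ext S
    simp only [Finset.mem_filter, Finset.mem_univ, true_and, Finset.mem_image,
      Finset.mem_powersetCard]
    constructor
    · intro hS
      refine ⟨S.filter (fun x => K22col x = 1), ⟨?_, hS.2.1⟩, ?_⟩
      · intro x hx
        simp only [Finset.mem_filter] at hx
        simp only [hnonhubs, Finset.mem_filter, Finset.mem_univ, true_and]
        exact (K22col_eq1 x).1 hx.2
      · have hD1 : S.filter (fun x => K22col x = 0) = {x0, x1} := by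
          apply Finset.eq_of_subset_of_card_le
          · intro x hx
            rw [← hhubeq]
            simp only [hhubs, Finset.mem_filter] at hx ⊢
            exact ⟨Finset.mem_univ x, (K22col_eq0 x).1 hx.2⟩
          · rw [Finset.card_pair hx01, hS.1]
        ext x
        simp only [Finset.mem_insert, Finset.mem_filter, Finset.mem_singleton]
        constructor
        · rintro (rfl | rfl | ⟨hxS, _⟩)
          · have : x0 ∈ S.filter (fun x => K22col x = 0) := by rw [hD1]; simp
            exact (Finset.mem_filter.1 this).1
          · have : x1 ∈ S.filter (fun x => K22col x = 0) := by rw [hD1]; simp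
            exact (Finset.mem_filter.1 this).1
          · exact hxS
        · intro hxS
          rcases fin2_cases (K22col x) with h0 | h1
          · have : x ∈ S.filter (fun x => K22col x = 0) := Finset.mem_filter.2 ⟨hxS, h0⟩
            rw [hD1] at this
            simp only [Finset.mem_insert, Finset.mem_singleton] at this
            tauto
          · exact Or.inr (Or.inr ⟨hxS, h1⟩)
    · rintro ⟨T, ⟨hTsub, hTcard⟩, rfl⟩
      have hTnon : ∀ t ∈ T, ¬ t.val < 2 := by
        intro t ht
        have := hTsub ht
        simp only [hnonhubs, Finset.mem_filter] at this
        exact this.2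
      have hx0T : x0 ∉ T := fun h => hTnon x0 h (by simp [hx0])
      have hx1T : x1 ∉ T := fun h => hTnon x1 h (by simp [hx1])
      have hfilter0 : (insert x0 (insert x1 T)).filter (fun x => K22col x = 0) = {x0, x1} := by
        ext x
        simp only [Finset.mem_filter, Finset.mem_insert, Finset.mem_singleton, K22col_eq0]
        constructor
        · rintro ⟨(rfl | rfl | hx), hcol⟩
          · exact Or.inl rfl
          · exact Or.inr rfl
          · exact absurd hcol (hTnon x hx)
        · rintro (rfl | rfl)
          · exact ⟨Or.inl rfl, by simp [hx0]⟩
          · exact ⟨Or.inr (Or.inl rfl), by simp [hx1]⟩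
      have hfilter1 : (insert x0 (insert x1 T)).filter (fun x => K22col x = 1) = T := by
        ext x
        simp only [Finset.mem_filter, Finset.mem_insert, K22col_eq1]
        constructor
        · rintro ⟨(rfl | rfl | hx), hcol⟩
          · exact absurd (by simp [hx0]) hcol
          · exact absurd (by simp [hx1]) hcol
          · exact hx
        · intro hx
          exact ⟨Or.inr (Or.inr hx), hTnon x hx⟩
      refine ⟨by rw [hfilter0]; exact Finset.card_pair hx01, by rw [hfilter1]; exact hTcard, ?_⟩
      intro p hp q hq hpq
      rcases fin2_cases (K22col p) with h0 | h1
      · have hq1 : K22col q = 1 := by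
          rcases fin2_cases (K22col q) with h | h
          · exact absurd (h0.trans h.symm) hpq
          · exact h
        exact Or.inl ⟨(K22col_eq0 p).1 h0, (K22col_eq1 q).1 hq1⟩
      · have hq0 : K22col q = 0 := by
          rcases fin2_cases (K22col q) with h | h
          · exact h
          · exact absurd (h1.trans h.symm) hpq
        exact Or.inr ⟨(K22col_eq0 q).1 hq0, (K22col_eq1 p).1 h1⟩
  rw [himg]
  rw [Finset.card_image_of_injOn, Finset.card_powersetCard, hnonhubcard]
  intro T hT T' hT' heq
  simp only [Finset.mem_coe, Finset.mem_powersetCard] at hT hT'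
  have hrec : ∀ (U : Finset (Fin n)), U ⊆ nonhubs →
      (insert x0 (insert x1 U)).filter (fun x => ¬ x.val < 2) = U := by
    intro U hU
    ext x
    simp only [Finset.mem_filter, Finset.mem_insert]
    constructor
    · rintro ⟨(rfl | rfl | hx), hcol⟩
      · exact absurd (by simp [hx0]) hcol
      · exact absurd (by simp [hx1]) hcol
      · exact hx
    · intro hx
      have := hU hx
      simp only [hnonhubs, Finset.mem_filter] at this
      exact ⟨Or.inr (Or.inr hx), this.2⟩
  rw [← hrec T hT.1, ← hrec T' hT'.1]
  exact congrArg (Finset.filter (fun x => ¬ x.val < 2)) heq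

end construction

section upper
open scoped Classical

variable (G : SimpleGraph (Fin n)) (C : G.Coloring (Fin 2))

noncomputable def cnF (p : Finset (Fin n)) : Finset (Fin n) :=
  univ.filter (fun z => ∀ w ∈ p, G.Adj w z)

noncomputable def Bk (S : Finset (Fin n)) : Finset (Fin n) :=
  if 3 ≤ (cnF G (S.filter fun x => C x = 0)).card then
    (S.filter fun x => C x = 0) ∪ cnF G (S.filter fun x => C x = 0)
  else if 3 ≤ (cnF G (S.filter fun x => C x = 1)).card then
    (S.filter fun x => C x = 1) ∪ cnF G (S.filter fun x => C x = 1)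
  else S

variable {G C}

lemma mem_cnF_pair {a c z : Fin n} : z ∈ cnF G {a, c} ↔ G.Adj a z ∧ G.Adj c z := by
  simp [cnF]

lemma cnF_color {a c z : Fin n} (hz : z ∈ cnF G {a, c}) : C z ≠ C a :=
  Ne.symm (C.valid (mem_cnF_pair.1 hz).1)

lemma cnF_color_eq {a c z z' : Fin n} (hz : z ∈ cnF G {a, c}) (hz' : z' ∈ cnF G {a, c}) :
    C z = C z' :=
  fin2_trans (cnF_color (C := C) hz) (cnF_color (C := C) hz')

lemma pair_color {a c x y : Fin n} (hcc : C a = C c) (hx : x ∈ ({a, c} : Finset (Fin n)))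
    (hy : y ∈ ({a, c} : Finset (Fin n))) : C x = C y := by
  simp only [Finset.mem_insert, Finset.mem_singleton] at hx hy
  rcases hx with rfl | rfl <;> rcases hy with rfl | rfl <;>
    first | rfl | exact hcc | exact hcc.symm

lemma exists_third {s : Finset (Fin n)} (h3 : 3 ≤ s.card) (x y : Fin n) :
    ∃ z ∈ s, z ≠ x ∧ z ≠ y := by
  have hle := Finset.le_card_sdiff ({x, y} : Finset (Fin n)) s
  have hxy : ({x, y} : Finset (Fin n)).card ≤ 2 := Finset.card_insert_le x {y}
  have hpos : 0 < (s \ ({x, y} : Finset (Fin n))).card := by omega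
  obtain ⟨z, hz⟩ := Finset.card_pos.1 hpos
  have h1 := (Finset.mem_sdiff.1 hz).1
  have h2 := (Finset.mem_sdiff.1 hz).2
  simp only [Finset.mem_insert, Finset.mem_singleton, not_or] at h2
  exact ⟨z, h1, h2.1, h2.2⟩

lemma pair_other {a c x : Fin n} (hac : a ≠ c) (hx : x ∈ ({a, c} : Finset (Fin n))) :
    ∃ y, x ≠ y ∧ y ∈ ({a, c} : Finset (Fin n)) ∧ ({a, c} : Finset (Fin n)) = {x, y} := by
  simp only [Finset.mem_insert, Finset.mem_singleton] at hx
  rcases hx with h | h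
  · exact ⟨c, by rw [h]; exact hac, by simp, by rw [h]⟩
  · exact ⟨a, by rw [h]; exact hac.symm, by simp, by rw [h, Finset.pair_comm]⟩

lemma pair_eq {a c w1 w2 : Fin n} (hac : a ≠ c) (h12 : w1 ≠ w2)
    (h1 : w1 ∈ ({a, c} : Finset (Fin n))) (h2 : w2 ∈ ({a, c} : Finset (Fin n))) :
    ({a, c} : Finset (Fin n)) = {w1, w2} := by
  refine (Finset.eq_of_subset_of_card_le ?_ ?_).symm
  · intro x hx
    simp only [Finset.mem_insert, Finset.mem_singleton] at hx
    rcases hx with rfl | rfl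
    exacts [h1, h2]
  · rw [Finset.card_pair hac, Finset.card_pair h12]

lemma hub_rigid (C : G.Coloring (Fin 2)) {a c u v p : Fin n} (hac : a ≠ c)
    (h3 : 3 ≤ (cnF G {a, c}).card) (hu : u ∈ cnF G {a, c}) (hv : v ∈ cnF G {a, c})
    (huv : u ≠ v) (hp : p ∈ cnF G {u, v}) (hpa : p ≠ a) (hpc : p ≠ c) :
    Contains (cycleGraph 6) G := by
  obtain ⟨z, hz, hzu, hzv⟩ := exists_third h3 u v
  exact containsC6_of G C a p c u v z
    (Ne.symm hpa) hac (hpc) huv (Ne.symm hzu) (Ne.symm hzv)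
    (mem_cnF_pair.1 hu).1 ((mem_cnF_pair.1 hp).1).symm ((mem_cnF_pair.1 hp).2).symm
    (mem_cnF_pair.1 hv).2 (mem_cnF_pair.1 hz).2 (mem_cnF_pair.1 hz).1

lemma no_double_hub (C : G.Coloring (Fin 2)) {a c u v : Fin n} (hac : a ≠ c) (huv : u ≠ v)
    (hu : u ∈ cnF G {a, c}) (hv : v ∈ cnF G {a, c})
    (h3 : 3 ≤ (cnF G {a, c}).card) (h3' : 3 ≤ (cnF G {u, v}).card) :
    Contains (cycleGraph 6) G := by
  obtain ⟨p, hp, hpa, hpc⟩ := exists_third h3' a c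
  exact hub_rigid C hac h3 hu hv huv hp hpa hpc

lemma Bk_cases {S : Finset (Fin n)} (hS : IsQuad G C S) :
    (∃ a c : Fin n, a ≠ c ∧ C a = C c ∧ 3 ≤ (cnF G {a, c}).card ∧
      ({a, c} : Finset (Fin n)) ⊆ S ∧ Bk G C S = {a, c} ∪ cnF G {a, c} ∧ S ⊆ Bk G C S) ∨
    (∃ a c u v : Fin n, a ≠ c ∧ u ≠ v ∧ C a = C c ∧ C u = C v ∧ C a ≠ C u ∧
      S = {a, c, u, v} ∧ cnF G {a, c} = {u, v} ∧ cnF G {u, v} = {a, c} ∧ Bk G C S = S) := by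
  obtain ⟨a, c, u, v, ca, cc, cu, cv, hac, huv, hD1, hD2, hSeq, eau, eav, ecu, ecv⟩ := quad_rep hS
  have hu : u ∈ cnF G {a, c} := mem_cnF_pair.2 ⟨eau, ecu⟩
  have hv : v ∈ cnF G {a, c} := mem_cnF_pair.2 ⟨eav, ecv⟩
  have ha' : a ∈ cnF G {u, v} := mem_cnF_pair.2 ⟨eau.symm, eav.symm⟩
  have hc' : c ∈ cnF G {u, v} := mem_cnF_pair.2 ⟨ecu.symm, ecv.symm⟩
  have hsubuv : ({u, v} : Finset (Fin n)) ⊆ cnF G {a, c} := by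
    intro x hx; simp only [Finset.mem_insert, Finset.mem_singleton] at hx
    rcases hx with rfl | rfl; exacts [hu, hv]
  have hsubac : ({a, c} : Finset (Fin n)) ⊆ cnF G {u, v} := by
    intro x hx; simp only [Finset.mem_insert, Finset.mem_singleton] at hx
    rcases hx with rfl | rfl; exacts [ha', hc']
  have h2uv : 2 ≤ (cnF G {a, c}).card := by
    have := Finset.card_le_card hsubuv; rw [Finset.card_pair huv] at this; omega
  have h2ac : 2 ≤ (cnF G {u, v}).card := by
    have := Finset.card_le_card hsubac; rw [Finset.card_pair hac] at this; omega
  have hBk : Bk G C S =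
      if 3 ≤ (cnF G {a, c}).card then {a, c} ∪ cnF G {a, c}
      else if 3 ≤ (cnF G {u, v}).card then {u, v} ∪ cnF G {u, v} else S := by
    rw [Bk, hD1, hD2]
  have hSuac : S ⊆ {a, c} ∪ cnF G {a, c} := by
    rw [hSeq]; intro x hx
    simp only [Finset.mem_insert, Finset.mem_singleton] at hx
    rcases hx with rfl | rfl | rfl | rfl
    · exact Finset.mem_union_left _ (by simp)
    · exact Finset.mem_union_left _ (by simp)
    · exact Finset.mem_union_right _ hu
    · exact Finset.mem_union_right _ hv
  have hSuuv : S ⊆ {u, v} ∪ cnF G {u, v} := by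
    rw [hSeq]; intro x hx
    simp only [Finset.mem_insert, Finset.mem_singleton] at hx
    rcases hx with rfl | rfl | rfl | rfl
    · exact Finset.mem_union_right _ ha'
    · exact Finset.mem_union_right _ hc'
    · exact Finset.mem_union_left _ (by simp)
    · exact Finset.mem_union_left _ (by simp)
  by_cases h1 : 3 ≤ (cnF G {a, c}).card
  · rw [if_pos h1] at hBk
    exact Or.inl ⟨a, c, hac, ca.trans cc.symm, h1,
      by rw [← hD1]; exact Finset.filter_subset _ S, hBk, hBk ▸ hSuac⟩
  · rw [if_neg h1] at hBk
    by_cases h2 : 3 ≤ (cnF G {u, v}).card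
    · rw [if_pos h2] at hBk
      exact Or.inl ⟨u, v, huv, cu.trans cv.symm, h2,
        by rw [← hD2]; exact Finset.filter_subset _ S, hBk, hBk ▸ hSuuv⟩
    · rw [if_neg h2] at hBk
      refine Or.inr ⟨a, c, u, v, hac, huv, ca.trans cc.symm, cu.trans cv.symm,
        by rw [ca, cu]; decide, hSeq, ?_, ?_, hBk⟩
      · exact (Finset.eq_of_subset_of_card_le hsubuv (by rw [Finset.card_pair huv]; omega)).symm
      · exact (Finset.eq_of_subset_of_card_le hsubac (by rw [Finset.card_pair hac]; omega)).symm

set_option maxHeartbeats 2000000 in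
lemma HH_branch (C : G.Coloring (Fin 2)) (hC6 : ¬ Contains (cycleGraph 6) G)
    {a c a' c' w1 w2 : Fin n}
    (hac : a ≠ c) (hcc : C a = C c) (h3 : 3 ≤ (cnF G {a, c}).card)
    (hac' : a' ≠ c') (hcc' : C a' = C c') (h3' : 3 ≤ (cnF G {a', c'}).card)
    (hDD' : ({a, c} : Finset (Fin n)) ≠ {a', c'}) (h12 : w1 ≠ w2)
    (hw1 : w1 ∈ ({a, c} : Finset (Fin n)) ∪ cnF G {a, c})
    (hw1' : w1 ∈ ({a', c'} : Finset (Fin n)) ∪ cnF G {a', c'})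
    (hw2 : w2 ∈ ({a, c} : Finset (Fin n)) ∪ cnF G {a, c})
    (hw2' : w2 ∈ ({a', c'} : Finset (Fin n)) ∪ cnF G {a', c'}) : False := by
  have memself : ∀ x y : Fin n, x ∈ ({x, y} : Finset (Fin n)) := fun x y => by simp
  -- core: both shared vertices are pages of one hub and belong to the other hub's diagonal
  have coreDblPage : ∀ (b d b' d' : Fin n), b ≠ d → C b = C d → 3 ≤ (cnF G {b, d}).card →
      b' ≠ d' → 3 ≤ (cnF G {b', d'}).card →
      w1 ∈ ({b, d} : Finset (Fin n)) → w2 ∈ ({b, d} : Finset (Fin n)) →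
      w1 ∈ cnF G {b', d'} → w2 ∈ cnF G {b', d'} → False := by
    intro b d b' d' hbd _ h3b hbd' h3b' h1D h2D h1P' h2P'
    have hDeq : ({b, d} : Finset (Fin n)) = {w1, w2} := pair_eq hbd h12 h1D h2D
    rw [hDeq] at h3b
    exact hC6 (no_double_hub C hbd' h12 h1P' h2P' h3b' h3b)
  -- core: both shared vertices are pages of both hubs
  have corePP : w1 ∈ cnF G {a, c} → w2 ∈ cnF G {a, c} →
      w1 ∈ cnF G {a', c'} → w2 ∈ cnF G {a', c'} → False := by
    intro h1P h2P h1P' h2P'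
    have hnsub : ¬ ({a', c'} : Finset (Fin n)) ⊆ {a, c} := by
      intro hsub
      exact hDD' ((Finset.eq_of_subset_of_card_le hsub
        (by rw [Finset.card_pair hac, Finset.card_pair hac']) ).symm)
    obtain ⟨p, hpD', hpD⟩ := Finset.not_subset.1 hnsub
    have hp : p ∈ cnF G {w1, w2} := by
      simp only [Finset.mem_insert, Finset.mem_singleton] at hpD'
      rcases hpD' with rfl | rfl
      · exact mem_cnF_pair.2 ⟨(mem_cnF_pair.1 h1P').1.symm, (mem_cnF_pair.1 h2P').1.symm⟩
      · exact mem_cnF_pair.2 ⟨(mem_cnF_pair.1 h1P').2.symm, (mem_cnF_pair.1 h2P').2.symm⟩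
    simp only [Finset.mem_insert, Finset.mem_singleton, not_or] at hpD
    exact hC6 (hub_rigid C hac h3 h1P h2P h12 hp hpD.1 hpD.2)
  -- core: w in both diagonals / other w in both page sets
  have coreXW : ∀ wa wb : Fin n, wa ≠ wb → wa ∈ ({a, c} : Finset (Fin n)) →
      wa ∈ ({a', c'} : Finset (Fin n)) → wb ∈ cnF G {a, c} → wb ∈ cnF G {a', c'} → False := by
    intro wa wb _ hwaD hwaD' hwbP hwbP'
    obtain ⟨c2, hwac2, _, hDeq⟩ := pair_other hac hwaD
    obtain ⟨c2', hwac2', _, hD'eq⟩ := pair_other hac' hwaD'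
    have hc2ne : c2 ≠ c2' := by
      intro h; exact hDD' (by rw [hDeq, hD'eq, h])
    rw [hDeq] at h3 hwbP
    rw [hD'eq] at h3' hwbP'
    obtain ⟨z, hz, hz1, _⟩ := exists_third h3 wb wb
    obtain ⟨z', hz', hz'1, hz'2⟩ := exists_third h3' wb z
    exact hC6 (containsC6_of G C c2 wa c2' z z' wb
      hwac2.symm hc2ne hwac2'
      (Ne.symm hz'2) hz1 hz'1
      (mem_cnF_pair.1 hz).2 (mem_cnF_pair.1 hz).1
      (mem_cnF_pair.1 hz').1 (mem_cnF_pair.1 hz').2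
      (mem_cnF_pair.1 hwbP').2 (mem_cnF_pair.1 hwbP).2)
  -- core: w1 in D ∩ P', w2 in P ∩ D' (cross-shared)
  have coreYZ : ∀ wa wb : Fin n, wa ≠ wb → wa ∈ ({a, c} : Finset (Fin n)) →
      wa ∈ cnF G {a', c'} → wb ∈ cnF G {a, c} → wb ∈ ({a', c'} : Finset (Fin n)) → False := by
    intro wa wb _ hwaD hwaP' hwbP hwbD'
    obtain ⟨c2, hwac2, _, hDeq⟩ := pair_other hac hwaD
    obtain ⟨c2', hwbc2', _, hD'eq⟩ := pair_other hac' hwbD'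
    rw [hDeq] at h3 hwbP
    rw [hD'eq] at h3' hwaP'
    obtain ⟨z, hz, hz1, hz2⟩ := exists_third h3 wb c2'
    obtain ⟨p, hp, hp1, hp2⟩ := exists_third h3' wa c2
    exact hC6 (containsC6_of G C c2 wa p z c2' wb
      hwac2.symm (Ne.symm hp2) (Ne.symm hp1)
      hz2 hz1 (Ne.symm hwbc2')
      (mem_cnF_pair.1 hz).2 (mem_cnF_pair.1 hz).1
      ((mem_cnF_pair.1 hwaP').2).symm ((mem_cnF_pair.1 hp).2).symm
      ((mem_cnF_pair.1 hp).1).symm (mem_cnF_pair.1 hwbP).2)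
  rcases Finset.mem_union.1 hw1 with h1D | h1P <;> rcases Finset.mem_union.1 hw2 with h2D | h2P <;>
    rcases Finset.mem_union.1 hw1' with h1D' | h1P' <;> rcases Finset.mem_union.1 hw2' with h2D' | h2P'
  · -- (D,D,D',D')
    exact hDD' ((pair_eq hac h12 h1D h2D).trans (pair_eq hac' h12 h1D' h2D').symm)
  · -- (D,D,D',P')
    have k1 : C w1 = C w2 := pair_color hcc h1D h2D
    have k2 : C w1 = C a' := pair_color hcc' h1D' (memself a' c')
    exact cnF_color (C := C) h2P' (k1.symm.trans k2)
  · -- (D,D,P',D')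
    have k1 : C w1 = C w2 := pair_color hcc h1D h2D
    have k2 : C w2 = C a' := pair_color hcc' h2D' (memself a' c')
    exact cnF_color (C := C) h1P' (k1.trans k2)
  · -- (D,D,P',P')
    exact coreDblPage a c a' c' hac hcc h3 hac' h3' h1D h2D h1P' h2P'
  · -- (D,P,D',D')
    have k1 : C w1 = C w2 := pair_color hcc' h1D' h2D'
    have k2 : C w1 = C a := pair_color hcc h1D (memself a c)
    exact cnF_color (C := C) h2P (k1.symm.trans k2)
  · -- (D,P,D',P')
    exact coreXW w1 w2 h12 h1D h1D' h2P h2P'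
  · -- (D,P,P',D')
    exact coreYZ w1 w2 h12 h1D h1P' h2P h2D'
  · -- (D,P,P',P')
    have k1 : C w1 = C w2 := cnF_color_eq (C := C) h1P' h2P'
    have k2 : C w1 = C a := pair_color hcc h1D (memself a c)
    exact cnF_color (C := C) h2P (k1.symm.trans k2)
  · -- (P,D,D',D')
    have k1 : C w1 = C w2 := pair_color hcc' h1D' h2D'
    have k2 : C w2 = C a := pair_color hcc h2D (memself a c)
    exact cnF_color (C := C) h1P (k1.trans k2)
  · -- (P,D,D',P')
    exact coreYZ w2 w1 h12.symm h2D h2P' h1P h1D'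
  · -- (P,D,P',D')
    exact coreXW w2 w1 h12.symm h2D h2D' h1P h1P'
  · -- (P,D,P',P')
    have k1 : C w1 = C w2 := cnF_color_eq (C := C) h1P' h2P'
    have k2 : C w2 = C a := pair_color hcc h2D (memself a c)
    exact cnF_color (C := C) h1P (k1.trans k2)
  · -- (P,P,D',D')
    exact coreDblPage a' c' a c hac' hcc' h3' hac h3 h1D' h2D' h1P h2P
  · -- (P,P,D',P')
    have k1 : C w1 = C w2 := cnF_color_eq (C := C) h1P h2P
    have k2 : C w1 = C a' := pair_color hcc' h1D' (memself a' c')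
    exact cnF_color (C := C) h2P' (k1.symm.trans k2)
  · -- (P,P,P',D')
    have k1 : C w1 = C w2 := cnF_color_eq (C := C) h1P h2P
    have k2 : C w2 = C a' := pair_color hcc' h2D' (memself a' c')
    exact cnF_color (C := C) h1P' (k1.trans k2)
  · -- (P,P,P',P')
    exact corePP h1P h2P h1P' h2P'

set_option maxHeartbeats 2000000 in
lemma HK_branch (C : G.Coloring (Fin 2)) (hC6 : ¬ Contains (cycleGraph 6) G)
    {a c : Fin n} (hac : a ≠ c) (hcc : C a = C c) (h3 : 3 ≤ (cnF G {a, c}).card)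
    {a' c' u' v' : Fin n} (hac' : a' ≠ c') (huv' : u' ≠ v') (hcc' : C a' = C c')
    (hcuv' : C u' = C v') (hacu' : C a' ≠ C u')
    (hex1' : cnF G {a', c'} = {u', v'}) (hex2' : cnF G {u', v'} = {a', c'})
    {w1 w2 : Fin n} (h12 : w1 ≠ w2)
    (hw1 : w1 ∈ ({a, c} : Finset (Fin n)) ∪ cnF G {a, c})
    (hw2 : w2 ∈ ({a, c} : Finset (Fin n)) ∪ cnF G {a, c})
    (hw1' : w1 ∈ ({a', c', u', v'} : Finset (Fin n)))
    (hw2' : w2 ∈ ({a', c', u', v'} : Finset (Fin n))) : False := by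
  have memself : ∀ x y : Fin n, x ∈ ({x, y} : Finset (Fin n)) := fun x y => by simp
  have hsplit : ∀ x : Fin n, x ∈ ({a', c', u', v'} : Finset (Fin n)) →
      x ∈ ({a', c'} : Finset (Fin n)) ∨ x ∈ ({u', v'} : Finset (Fin n)) := by
    intro x hx
    simp only [Finset.mem_insert, Finset.mem_singleton] at hx ⊢
    tauto
  have hcross : ∀ x ∈ ({a', c'} : Finset (Fin n)), ∀ y ∈ ({u', v'} : Finset (Fin n)),
      G.Adj x y := by
    intro x hx y hy
    have hy' : y ∈ cnF G {a', c'} := by rw [hex1']; exact hy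
    have h2 := mem_cnF_pair.1 hy'
    simp only [Finset.mem_insert, Finset.mem_singleton] at hx
    rcases hx with rfl | rfl
    exacts [h2.1, h2.2]
  have hcross2 : ∀ x ∈ ({u', v'} : Finset (Fin n)), ∀ y ∈ ({a', c'} : Finset (Fin n)),
      G.Adj x y := fun x hx y hy => (hcross y hy x hx).symm
  have coreDD : ∀ e1 e2 f1 f2 : Fin n, e1 ≠ e2 → f1 ≠ f2 → cnF G {e1, e2} = {f1, f2} →
      w1 ∈ ({e1, e2} : Finset (Fin n)) → w2 ∈ ({e1, e2} : Finset (Fin n)) →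
      w1 ∈ ({a, c} : Finset (Fin n)) → w2 ∈ ({a, c} : Finset (Fin n)) → False := by
    intro e1 e2 f1 f2 he hf hex h1E h2E h1D h2D
    have hDeq := pair_eq hac h12 h1D h2D
    have hEeq := pair_eq he h12 h1E h2E
    rw [hDeq] at h3
    rw [hEeq] at hex
    rw [hex, Finset.card_pair hf] at h3
    omega
  have corePP : ∀ e1 e2 f1 f2 : Fin n, e1 ≠ e2 → f1 ≠ f2 → cnF G {e1, e2} = {f1, f2} →
      cnF G {f1, f2} = {e1, e2} →
      w1 ∈ ({e1, e2} : Finset (Fin n)) → w2 ∈ ({e1, e2} : Finset (Fin n)) →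
      w1 ∈ cnF G {a, c} → w2 ∈ cnF G {a, c} → False := by
    intro e1 e2 f1 f2 he hf hex hexF h1E h2E h1P h2P
    have hEeq := pair_eq he h12 h1E h2E
    rw [hEeq] at hex hexF
    have hf1 : f1 ∈ cnF G {w1, w2} := by rw [hex]; exact memself f1 f2
    have hf2 : f2 ∈ cnF G {w1, w2} := by rw [hex]; simp
    by_cases hfa : f1 ∈ ({a, c} : Finset (Fin n))
    · by_cases hfb : f2 ∈ ({a, c} : Finset (Fin n))
      · have hDf := pair_eq hac hf hfa hfb
        rw [hDf, hexF, Finset.card_pair h12] at h3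
        omega
      · simp only [Finset.mem_insert, Finset.mem_singleton, not_or] at hfb
        exact hC6 (hub_rigid C hac h3 h1P h2P h12 hf2 hfb.1 hfb.2)
    · simp only [Finset.mem_insert, Finset.mem_singleton, not_or] at hfa
      exact hC6 (hub_rigid C hac h3 h1P h2P h12 hf1 hfa.1 hfa.2)
  have coreDP : ∀ e1 e2 f1 f2 : Fin n, e1 ≠ e2 → f1 ≠ f2 → cnF G {e1, e2} = {f1, f2} →
      (∀ x ∈ ({e1, e2} : Finset (Fin n)), ∀ y ∈ ({f1, f2} : Finset (Fin n)), G.Adj x y) →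
      ∀ wa wb : Fin n, wa ≠ wb → wa ∈ ({e1, e2} : Finset (Fin n)) →
      wb ∈ ({f1, f2} : Finset (Fin n)) →
      wa ∈ ({a, c} : Finset (Fin n)) → wb ∈ cnF G {a, c} → False := by
    intro e1 e2 f1 f2 he hf hex hcr wa wb hab hwaE hwbF hwaD hwbP
    obtain ⟨c2, hwac2, _, hDeq⟩ := pair_other hac hwaD
    obtain ⟨se, hwas, hsE, hEeq⟩ := pair_other he hwaE
    obtain ⟨t, hwbt, htF, hFeq⟩ := pair_other hf hwbF
    rw [hDeq] at h3 hwbP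
    by_cases hsc2 : se = c2
    · rw [hEeq, hsc2] at hex
      rw [hex, Finset.card_pair hf] at h3
      omega
    · obtain ⟨z, hz, hz1, hz2⟩ := exists_third h3 wb t
      exact hC6 (containsC6_of G C c2 wa se z t wb
        hwac2.symm (fun h => hsc2 h.symm) hwas
        hz2 hz1 hwbt.symm
        (mem_cnF_pair.1 hz).2 (mem_cnF_pair.1 hz).1
        (hcr wa hwaE t htF) (hcr se hsE t htF)
        (hcr se hsE wb hwbF) (mem_cnF_pair.1 hwbP).2)
  rcases Finset.mem_union.1 hw1 with h1D | h1P <;> rcases Finset.mem_union.1 hw2 with h2D | h2P <;>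
    rcases hsplit w1 hw1' with h1E | h1F <;> rcases hsplit w2 hw2' with h2E | h2F
  · -- (D,D,E,E)
    exact coreDD a' c' u' v' hac' huv' hex1' h1E h2E h1D h2D
  · -- (D,D,E,F)
    have k1 : C w1 = C w2 := pair_color hcc h1D h2D
    have k2 : C w1 = C a' := pair_color hcc' h1E (memself a' c')
    have k3 : C w2 = C u' := pair_color hcuv' h2F (memself u' v')
    exact hacu' (k2.symm.trans (k1.trans k3))
  · -- (D,D,F,E)
    have k1 : C w1 = C w2 := pair_color hcc h1D h2D
    have k2 : C w1 = C u' := pair_color hcuv' h1F (memself u' v')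
    have k3 : C w2 = C a' := pair_color hcc' h2E (memself a' c')
    exact hacu' (k3.symm.trans (k1.symm.trans k2))
  · -- (D,D,F,F)
    exact coreDD u' v' a' c' huv' hac' hex2' h1F h2F h1D h2D
  · -- (D,P,E,E)
    have k1 : C w1 = C w2 := pair_color hcc' h1E h2E
    have k2 : C w1 = C a := pair_color hcc h1D (memself a c)
    exact cnF_color (C := C) h2P (k1.symm.trans k2)
  · -- (D,P,E,F)
    exact coreDP a' c' u' v' hac' huv' hex1' hcross w1 w2 h12 h1E h2F h1D h2P
  · -- (D,P,F,E)
    exact coreDP u' v' a' c' huv' hac' hex2' hcross2 w1 w2 h12 h1F h2E h1D h2P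
  · -- (D,P,F,F)
    have k1 : C w1 = C w2 := pair_color hcuv' h1F h2F
    have k2 : C w1 = C a := pair_color hcc h1D (memself a c)
    exact cnF_color (C := C) h2P (k1.symm.trans k2)
  · -- (P,D,E,E)
    have k1 : C w1 = C w2 := pair_color hcc' h1E h2E
    have k2 : C w2 = C a := pair_color hcc h2D (memself a c)
    exact cnF_color (C := C) h1P (k1.trans k2)
  · -- (P,D,E,F)
    exact coreDP u' v' a' c' huv' hac' hex2' hcross2 w2 w1 h12.symm h2F h1E h2D h1P
  · -- (P,D,F,E)
    exact coreDP a' c' u' v' hac' huv' hex1' hcross w2 w1 h12.symm h2E h1F h2D h1P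
  · -- (P,D,F,F)
    have k1 : C w1 = C w2 := pair_color hcuv' h1F h2F
    have k2 : C w2 = C a := pair_color hcc h2D (memself a c)
    exact cnF_color (C := C) h1P (k1.trans k2)
  · -- (P,P,E,E)
    exact corePP a' c' u' v' hac' huv' hex1' hex2' h1E h2E h1P h2P
  · -- (P,P,E,F)
    have k1 : C w1 = C w2 := cnF_color_eq (C := C) h1P h2P
    have k2 : C w1 = C a' := pair_color hcc' h1E (memself a' c')
    have k3 : C w2 = C u' := pair_color hcuv' h2F (memself u' v')
    exact hacu' (k2.symm.trans (k1.trans k3))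
  · -- (P,P,F,E)
    have k1 : C w1 = C w2 := cnF_color_eq (C := C) h1P h2P
    have k2 : C w1 = C u' := pair_color hcuv' h1F (memself u' v')
    have k3 : C w2 = C a' := pair_color hcc' h2E (memself a' c')
    exact hacu' (k3.symm.trans (k1.symm.trans k2))
  · -- (P,P,F,F)
    exact corePP u' v' a' c' huv' hac' hex2' hex1' h1F h2F h1P h2P

set_option maxHeartbeats 2000000 in
lemma KK_branch (C : G.Coloring (Fin 2)) (hC6 : ¬ Contains (cycleGraph 6) G)
    {a c u v a' c' u' v' : Fin n}
    (hac : a ≠ c) (huv : u ≠ v) (hcc : C a = C c) (hcuv : C u = C v) (hacu : C a ≠ C u)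
    (hex1 : cnF G {a, c} = {u, v}) (hex2 : cnF G {u, v} = {a, c})
    (hac' : a' ≠ c') (huv' : u' ≠ v') (hcc' : C a' = C c') (hcuv' : C u' = C v')
    (hacu' : C a' ≠ C u')
    (hex1' : cnF G {a', c'} = {u', v'}) (hex2' : cnF G {u', v'} = {a', c'})
    (hSS' : ({a, c} : Finset (Fin n)) ∪ {u, v} ≠ ({a', c'} : Finset (Fin n)) ∪ {u', v'})
    {w1 w2 : Fin n} (h12 : w1 ≠ w2)
    (hw1 : w1 ∈ ({a, c} : Finset (Fin n)) ∪ {u, v})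
    (hw2 : w2 ∈ ({a, c} : Finset (Fin n)) ∪ {u, v})
    (hw1' : w1 ∈ ({a', c'} : Finset (Fin n)) ∪ {u', v'})
    (hw2' : w2 ∈ ({a', c'} : Finset (Fin n)) ∪ {u', v'}) : False := by
  have memself : ∀ x y : Fin n, x ∈ ({x, y} : Finset (Fin n)) := fun x y => by simp
  have coreSame : ∀ e1 e2 f1 f2 e1' e2' f1' f2' : Fin n, e1 ≠ e2 → e1' ≠ e2' →
      cnF G {e1, e2} = {f1, f2} → cnF G {e1', e2'} = {f1', f2'} →
      ({e1, e2} : Finset (Fin n)) ∪ {f1, f2} = {a, c} ∪ {u, v} →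
      ({e1', e2'} : Finset (Fin n)) ∪ {f1', f2'} = ({a', c'} : Finset (Fin n)) ∪ {u', v'} →
      w1 ∈ ({e1, e2} : Finset (Fin n)) → w2 ∈ ({e1, e2} : Finset (Fin n)) →
      w1 ∈ ({e1', e2'} : Finset (Fin n)) → w2 ∈ ({e1', e2'} : Finset (Fin n)) → False := by
    intro e1 e2 f1 f2 e1' e2' f1' f2' he he' hex hex' hU hU' h1E h2E h1E' h2E'
    have hE := pair_eq he h12 h1E h2E
    have hE' := pair_eq he' h12 h1E' h2E'
    have hEE' : ({e1, e2} : Finset (Fin n)) = {e1', e2'} := hE.trans hE'.symm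
    have hFF' : ({f1, f2} : Finset (Fin n)) = {f1', f2'} := by rw [← hex, ← hex', hEE']
    exact hSS' (by rw [← hU, ← hU', hEE', hFF'])
  have coreDiff : ∀ wa wb s t s' t' : Fin n, wa ≠ wb → wa ≠ s → wb ≠ t → wa ≠ s' → wb ≠ t' →
      cnF G {wa, s} = {wb, t} → cnF G {wb, t} = {wa, s} →
      cnF G {wa, s'} = {wb, t'} → cnF G {wb, t'} = {wa, s'} →
      ({wa, s} : Finset (Fin n)) ∪ {wb, t} = {a, c} ∪ {u, v} →
      ({wa, s'} : Finset (Fin n)) ∪ {wb, t'} = ({a', c'} : Finset (Fin n)) ∪ {u', v'} → False := by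
    intro wa wb s t s' t' hab has hbt has' hbt' hx1 hx2 hx1' hx2' hU hU'
    have hcr1 : ∀ x ∈ ({wa, s} : Finset (Fin n)), ∀ y ∈ ({wb, t} : Finset (Fin n)),
        G.Adj x y := by
      intro x hx y hy
      have hy' : y ∈ cnF G {wa, s} := by rw [hx1]; exact hy
      have h2 := mem_cnF_pair.1 hy'
      simp only [Finset.mem_insert, Finset.mem_singleton] at hx
      rcases hx with rfl | rfl
      exacts [h2.1, h2.2]
    have hcr2 : ∀ x ∈ ({wa, s'} : Finset (Fin n)), ∀ y ∈ ({wb, t'} : Finset (Fin n)),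
        G.Adj x y := by
      intro x hx y hy
      have hy' : y ∈ cnF G {wa, s'} := by rw [hx1']; exact hy
      have h2 := mem_cnF_pair.1 hy'
      simp only [Finset.mem_insert, Finset.mem_singleton] at hx
      rcases hx with rfl | rfl
      exacts [h2.1, h2.2]
    by_cases hss : s = s'
    · have hteq : ({wb, t} : Finset (Fin n)) = {wb, t'} := by rw [← hx1, ← hx1', hss]
      exact hSS' (by rw [← hU, ← hU', hss, hteq])
    · have htt : t ≠ t' := by
        intro h
        have hmem : s' ∈ cnF G {wb, t'} := by rw [hx2']; simp
        rw [← h] at hmem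
        rw [hx2] at hmem
        simp only [Finset.mem_insert, Finset.mem_singleton] at hmem
        rcases hmem with h' | h'
        · exact has' h'.symm
        · exact hss h'.symm
      exact hC6 (containsC6_of G C s wa s' t t' wb
        (Ne.symm has) hss has' htt (Ne.symm hbt) (Ne.symm hbt')
        (hcr1 s (by simp) t (by simp)) (hcr1 wa (by simp) t (by simp))
        (hcr2 wa (by simp) t' (by simp)) (hcr2 s' (by simp) t' (by simp))
        (hcr2 s' (by simp) wb (by simp)) (hcr1 s (by simp) wb (by simp)))
  have hUc : ({u, v} : Finset (Fin n)) ∪ {a, c} = {a, c} ∪ {u, v} := Finset.union_comm _ _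
  have hUc' : ({u', v'} : Finset (Fin n)) ∪ {a', c'} =
      ({a', c'} : Finset (Fin n)) ∪ {u', v'} := Finset.union_comm _ _
  rcases Finset.mem_union.1 hw1 with h1E | h1F <;> rcases Finset.mem_union.1 hw2 with h2E | h2F <;>
    rcases Finset.mem_union.1 hw1' with h1E' | h1F' <;> rcases Finset.mem_union.1 hw2' with h2E' | h2F'
  · -- (E,E,E',E')
    exact coreSame a c u v a' c' u' v' hac hac' hex1 hex1' rfl rfl h1E h2E h1E' h2E'
  · -- (E,E,E',F')
    have k1 : C w1 = C w2 := pair_color hcc h1E h2E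
    have k2 : C w1 = C a' := pair_color hcc' h1E' (memself a' c')
    have k3 : C w2 = C u' := pair_color hcuv' h2F' (memself u' v')
    exact hacu' (k2.symm.trans (k1.trans k3))
  · -- (E,E,F',E')
    have k1 : C w1 = C w2 := pair_color hcc h1E h2E
    have k2 : C w1 = C u' := pair_color hcuv' h1F' (memself u' v')
    have k3 : C w2 = C a' := pair_color hcc' h2E' (memself a' c')
    exact hacu' (k3.symm.trans (k1.symm.trans k2))
  · -- (E,E,F',F')
    exact coreSame a c u v u' v' a' c' hac huv' hex1 hex2' rfl hUc' h1E h2E h1F' h2F'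
  · -- (E,F,E',E')
    have k1 : C w1 = C w2 := pair_color hcc' h1E' h2E'
    have k2 : C w1 = C a := pair_color hcc h1E (memself a c)
    have k3 : C w2 = C u := pair_color hcuv h2F (memself u v)
    exact hacu (k2.symm.trans (k1.trans k3))
  · -- (E,F,E',F')
    obtain ⟨s, h1s, _, hEe⟩ := pair_other hac h1E
    obtain ⟨t, h2t, _, hFe⟩ := pair_other huv h2F
    obtain ⟨s', h1s', _, hEe'⟩ := pair_other hac' h1E'
    obtain ⟨t', h2t', _, hFe'⟩ := pair_other huv' h2F'
    rw [hEe, hFe] at hex1 hex2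
    rw [hEe', hFe'] at hex1' hex2'
    exact coreDiff w1 w2 s t s' t' h12 h1s h2t h1s' h2t' hex1 hex2 hex1' hex2'
      (by rw [← hEe, ← hFe]) (by rw [← hEe', ← hFe'])
  · -- (E,F,F',E')
    obtain ⟨s, h1s, _, hEe⟩ := pair_other hac h1E
    obtain ⟨t, h2t, _, hFe⟩ := pair_other huv h2F
    obtain ⟨s', h1s', _, hEe'⟩ := pair_other huv' h1F'
    obtain ⟨t', h2t', _, hFe'⟩ := pair_other hac' h2E'
    rw [hEe, hFe] at hex1 hex2
    rw [hEe'] at hex2'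
    rw [hFe'] at hex1'
    rw [hFe'] at hex2'
    rw [hEe'] at hex1'
    exact coreDiff w1 w2 s t s' t' h12 h1s h2t h1s' h2t' hex1 hex2 hex2' hex1'
      (by rw [← hEe, ← hFe]) (by rw [← hEe', ← hFe', hUc'])
  · -- (E,F,F',F')
    have k1 : C w1 = C w2 := pair_color hcuv' h1F' h2F'
    have k2 : C w1 = C a := pair_color hcc h1E (memself a c)
    have k3 : C w2 = C u := pair_color hcuv h2F (memself u v)
    exact hacu (k2.symm.trans (k1.trans k3))
  · -- (F,E,E',E')
    have k1 : C w1 = C w2 := pair_color hcc' h1E' h2E'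
    have k2 : C w1 = C u := pair_color hcuv h1F (memself u v)
    have k3 : C w2 = C a := pair_color hcc h2E (memself a c)
    exact hacu (k3.symm.trans (k1.symm.trans k2))
  · -- (F,E,E',F')
    obtain ⟨s, h2s, _, hEe⟩ := pair_other hac h2E
    obtain ⟨t, h1t, _, hFe⟩ := pair_other huv h1F
    obtain ⟨s', h2s', _, hEe'⟩ := pair_other huv' h2F'
    obtain ⟨t', h1t', _, hFe'⟩ := pair_other hac' h1E'
    rw [hEe, hFe] at hex1 hex2
    rw [hFe'] at hex1'
    rw [hEe'] at hex1'
    rw [hFe'] at hex2'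
    rw [hEe'] at hex2'
    exact coreDiff w2 w1 s t s' t' h12.symm h2s h1t h2s' h1t' hex1 hex2 hex2' hex1'
      (by rw [← hEe, ← hFe]) (by rw [← hEe', ← hFe', hUc'])
  · -- (F,E,F',E')
    obtain ⟨s, h2s, _, hEe⟩ := pair_other hac h2E
    obtain ⟨t, h1t, _, hFe⟩ := pair_other huv h1F
    obtain ⟨s', h2s', _, hEe'⟩ := pair_other hac' h2E'
    obtain ⟨t', h1t', _, hFe'⟩ := pair_other huv' h1F'
    rw [hEe, hFe] at hex1 hex2
    rw [hEe', hFe'] at hex1' hex2'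
    exact coreDiff w2 w1 s t s' t' h12.symm h2s h1t h2s' h1t' hex1 hex2 hex1' hex2'
      (by rw [← hEe, ← hFe]) (by rw [← hEe', ← hFe'])
  · -- (F,E,F',F')
    have k1 : C w1 = C w2 := pair_color hcuv' h1F' h2F'
    have k2 : C w1 = C u := pair_color hcuv h1F (memself u v)
    have k3 : C w2 = C a := pair_color hcc h2E (memself a c)
    exact hacu (k3.symm.trans (k1.symm.trans k2))
  · -- (F,F,E',E')
    exact coreSame u v a c a' c' u' v' huv hac' hex2 hex1' hUc rfl h1F h2F h1E' h2E'
  · -- (F,F,E',F')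
    have k1 : C w1 = C w2 := pair_color hcuv h1F h2F
    have k2 : C w1 = C a' := pair_color hcc' h1E' (memself a' c')
    have k3 : C w2 = C u' := pair_color hcuv' h2F' (memself u' v')
    exact hacu' (k2.symm.trans (k1.trans k3))
  · -- (F,F,F',E')
    have k1 : C w1 = C w2 := pair_color hcuv h1F h2F
    have k2 : C w1 = C u' := pair_color hcuv' h1F' (memself u' v')
    have k3 : C w2 = C a' := pair_color hcc' h2E' (memself a' c')
    exact hacu' (k3.symm.trans (k1.symm.trans k2))
  · -- (F,F,F',F')
    exact coreSame u v a c u' v' a' c' huv huv' hex2 hex2' hUc hUc' h1F h2F h1F' h2F'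

set_option maxHeartbeats 2000000 in
lemma Bk_inter (C : G.Coloring (Fin 2)) (hC6 : ¬ Contains (cycleGraph 6) G)
    {S S' : Finset (Fin n)} (hS : IsQuad G C S) (hS' : IsQuad G C S')
    (hne : Bk G C S ≠ Bk G C S') : (Bk G C S ∩ Bk G C S').card ≤ 1 := by
  by_contra hcard
  push_neg at hcard
  obtain ⟨w1, hw1, w2, hw2, h12⟩ := Finset.one_lt_card.1 hcard
  have hw1S := (Finset.mem_inter.1 hw1).1
  have hw1S' := (Finset.mem_inter.1 hw1).2
  have hw2S := (Finset.mem_inter.1 hw2).1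
  have hw2S' := (Finset.mem_inter.1 hw2).2
  have hU4 : ∀ p q r t : Fin n, ({p, q, r, t} : Finset (Fin n)) = {p, q} ∪ {r, t} := by
    intro p q r t; ext x
    simp only [Finset.mem_insert, Finset.mem_singleton, Finset.mem_union]
    tauto
  rcases Bk_cases hS with ⟨a, c, hac, hcc, h3, hdsub, hBS, hSB⟩ |
      ⟨a, c, u, v, hac, huv, hcc, hcuv, hacu, hSeq, hex1, hex2, hBS⟩ <;>
    rcases Bk_cases hS' with ⟨a', c', hac', hcc', h3', hdsub', hBS', hSB'⟩ |
      ⟨a', c', u', v', hac', huv', hcc', hcuv', hacu', hSeq', hex1', hex2', hBS'⟩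
  · rw [hBS] at hw1S hw2S
    rw [hBS'] at hw1S' hw2S'
    have hDD' : ({a, c} : Finset (Fin n)) ≠ {a', c'} := by
      intro h; exact hne (by rw [hBS, hBS', h])
    exact HH_branch C hC6 hac hcc h3 hac' hcc' h3' hDD' h12 hw1S hw1S' hw2S hw2S'
  · rw [hBS] at hw1S hw2S
    rw [hBS', hSeq'] at hw1S' hw2S'
    exact HK_branch C hC6 hac hcc h3 hac' huv' hcc' hcuv' hacu' hex1' hex2' h12
      hw1S hw2S hw1S' hw2S'
  · rw [hBS, hSeq] at hw1S hw2S
    rw [hBS'] at hw1S' hw2S'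
    exact HK_branch C hC6 hac' hcc' h3' hac huv hcc hcuv hacu hex1 hex2 h12
      hw1S' hw2S' hw1S hw2S
  · rw [hBS, hSeq, hU4] at hw1S hw2S
    rw [hBS', hSeq', hU4] at hw1S' hw2S'
    have hSS' : ({a, c} : Finset (Fin n)) ∪ {u, v} ≠ ({a', c'} : Finset (Fin n)) ∪ {u', v'} := by
      intro h
      exact hne (by rw [hBS, hBS', hSeq, hSeq', hU4, hU4, h])
    exact KK_branch C hC6 hac huv hcc hcuv hacu hex1 hex2 hac' huv' hcc' hcuv' hacu'
      hex1' hex2' hSS' h12 hw1S hw2S hw1S' hw2S'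

set_option maxHeartbeats 2000000 in
lemma fiber_bound (C : G.Coloring (Fin 2)) (b : Finset (Fin n)) :
    (((univ : Finset (Finset (Fin n))).filter (IsQuad G C)).filter
      (fun S => Bk G C S = b)).card ≤ (b.card - 2).choose 2 := by
  classical
  set F := ((univ : Finset (Finset (Fin n))).filter (IsQuad G C)).filter
      (fun S => Bk G C S = b) with hF
  rcases Finset.eq_empty_or_nonempty F with hFe | ⟨S0, hS0⟩
  · rw [hFe]; simp
  have hS0q : IsQuad G C S0 := by
    have := Finset.mem_filter.1 (Finset.mem_filter.1 hS0).1
    exact this.2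
  have hB0 : Bk G C S0 = b := (Finset.mem_filter.1 hS0).2
  -- a hub book has at least 5 vertices
  have hubcard : ∀ p q : Fin n, p ≠ q → 3 ≤ (cnF G {p, q}).card →
      5 ≤ (({p, q} : Finset (Fin n)) ∪ cnF G {p, q}).card := by
    intro p q hpq h3
    have hdisj : Disjoint ({p, q} : Finset (Fin n)) (cnF G {p, q}) := by
      rw [Finset.disjoint_left]
      intro x hx hx'
      have h2 := mem_cnF_pair.1 hx'
      simp only [Finset.mem_insert, Finset.mem_singleton] at hx
      rcases hx with rfl | rfl
      · exact G.irrefl h2.1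
      · exact G.irrefl h2.2
    rw [Finset.card_union_of_disjoint hdisj, Finset.card_pair hpq]
    omega
  rcases Bk_cases hS0q with ⟨a, c, hac, hcc, h3, hdsub, hBS0, hSB0⟩ |
      ⟨a, c, u, v, hac, huv, hcc, hcuv, hacu, hSeq, hex1, hex2, hBS0⟩
  · -- hub case
    have hbeq : b = ({a, c} : Finset (Fin n)) ∪ cnF G {a, c} := by rw [← hB0, hBS0]
    have hbcard : b.card = 2 + (cnF G {a, c}).card := by
      rw [hbeq]
      have hdisj : Disjoint ({a, c} : Finset (Fin n)) (cnF G {a, c}) := by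
        rw [Finset.disjoint_left]
        intro x hx hx'
        have h2 := mem_cnF_pair.1 hx'
        simp only [Finset.mem_insert, Finset.mem_singleton] at hx
        rcases hx with rfl | rfl
        · exact G.irrefl h2.1
        · exact G.irrefl h2.2
      rw [Finset.card_union_of_disjoint hdisj, Finset.card_pair hac]
    have hfilter : b.filter (fun x => C x = C a) = {a, c} := by
      ext x
      simp only [Finset.mem_filter, hbeq, Finset.mem_union, Finset.mem_insert,
        Finset.mem_singleton]
      constructor
      · rintro ⟨hx | hx, hcx⟩
        · exact hx
        · exact absurd hcx (cnF_color (C := C) hx)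
      · rintro (rfl | rfl)
        · exact ⟨Or.inl (Or.inl rfl), rfl⟩
        · exact ⟨Or.inl (Or.inr rfl), hcc.symm⟩
    -- key: every member of the fiber has the same hub pair {a,c}
    have hkey : ∀ S ∈ F, ({a, c} : Finset (Fin n)) ⊆ S ∧ (S \ {a, c}).card = 2 ∧
        S \ {a, c} ⊆ cnF G {a, c} := by
      intro S hSF
      have hSq : IsQuad G C S := (Finset.mem_filter.1 (Finset.mem_filter.1 hSF).1).2
      have hBb : Bk G C S = b := (Finset.mem_filter.1 hSF).2
      rcases Bk_cases hSq with ⟨α, γ, hαγ, hccS, h3S, hdsubS, hBS, hSB⟩ |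
          ⟨α, γ, μ, ν, hαγ, hμν, _, _, _, hSeqS, _, _, hBS⟩
      · -- hub
        have heq : ({α, γ} : Finset (Fin n)) ∪ cnF G {α, γ} = b := by rw [← hBS, hBb]
        have hfilter2 : b.filter (fun x => C x = C α) = {α, γ} := by
          ext x
          simp only [Finset.mem_filter, ← heq, Finset.mem_union, Finset.mem_insert,
            Finset.mem_singleton]
          constructor
          · rintro ⟨hx | hx, hcx⟩
            · exact hx
            · exact absurd hcx (cnF_color (C := C) hx)
          · rintro (rfl | rfl)
            · exact ⟨Or.inl (Or.inl rfl), rfl⟩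
            · exact ⟨Or.inl (Or.inr rfl), hccS.symm⟩
        have hdiag : ({α, γ} : Finset (Fin n)) = {a, c} := by
          by_cases hcol : C α = C a
          · rw [← hfilter, ← hfilter2, hcol]
          · exfalso
            have hsub2 : cnF G {a, c} ⊆ b.filter (fun x => C x = C α) := by
              intro x hx
              refine Finset.mem_filter.2 ⟨by rw [hbeq]; exact Finset.mem_union_right _ hx, ?_⟩
              exact fin2_trans (cnF_color (C := C) hx) hcol
            have := Finset.card_le_card hsub2
            rw [hfilter2, Finset.card_pair hαγ] at this
            omega
        have hsubS : ({a, c} : Finset (Fin n)) ⊆ S := hdiag ▸ hdsubS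
        refine ⟨hsubS, ?_, ?_⟩
        · rw [Finset.card_sdiff_of_subset hsubS, quad_card hSq, Finset.card_pair hac]
        · intro x hx
          have hxS := (Finset.mem_sdiff.1 hx).1
          have hxn := (Finset.mem_sdiff.1 hx).2
          have hxb : x ∈ b := by rw [← hBb]; exact hSB hxS
          rw [hbeq] at hxb
          rcases Finset.mem_union.1 hxb with h | h
          · exact absurd h hxn
          · exact h
      · -- K22 : impossible, book too small
        exfalso
        have hc4 : (Bk G C S).card = 4 := by rw [hBS]; exact quad_card hSq
        have h5 : 5 ≤ b.card := by rw [hbeq] at hbcard ⊢; omega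
        rw [hBb] at hc4
        omega
    have hinj : Set.InjOn (fun S => S \ ({a, c} : Finset (Fin n))) F := by
      intro S hSF S' hSF' heq
      have h1 := (hkey S hSF).1
      have h2 := (hkey S' hSF').1
      have e1 : S = S \ ({a, c} : Finset (Fin n)) ∪ {a, c} := (Finset.sdiff_union_of_subset h1).symm
      have e2 : S' = S' \ ({a, c} : Finset (Fin n)) ∪ {a, c} :=
        (Finset.sdiff_union_of_subset h2).symm
      have heq' : S \ ({a, c} : Finset (Fin n)) = S' \ {a, c} := heq
      rw [e1, e2, heq']
    have hmaps : ∀ S ∈ F, S \ ({a, c} : Finset (Fin n)) ∈ (cnF G {a, c}).powersetCard 2 := by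
      intro S hSF
      exact Finset.mem_powersetCard.2 ⟨(hkey S hSF).2.2, (hkey S hSF).2.1⟩
    have hcard := Finset.card_le_card_of_injOn _ hmaps hinj
    rw [Finset.card_powersetCard] at hcard
    have : b.card - 2 = (cnF G {a, c}).card := by omega
    rw [this]
    exact hcard
  · -- K22 case: the fiber is {S0}
    have hb4 : b.card = 4 := by rw [← hB0, hBS0]; exact quad_card hS0q
    have hsub : F ⊆ {S0} := by
      intro S hSF
      have hSq : IsQuad G C S := (Finset.mem_filter.1 (Finset.mem_filter.1 hSF).1).2
      have hBb : Bk G C S = b := (Finset.mem_filter.1 hSF).2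
      rcases Bk_cases hSq with ⟨α, γ, hαγ, _, h3S, _, hBS, _⟩ |
          ⟨α, γ, μ, ν, _, _, _, _, _, _, _, _, hBS⟩
      · exfalso
        have := hubcard α γ hαγ h3S
        rw [← hBS, hBb, hb4] at this
        omega
      · have hS0eq : S0 = b := by rw [← hB0, hBS0]
        have hSeq2 : S = b := by rw [← hBb, hBS]
        simp [hSeq2, hS0eq]
    have := Finset.card_le_card hsub
    rw [Finset.card_singleton] at this
    rw [hb4]
    exact this

set_option maxHeartbeats 2000000 in
lemma quads_le (C : G.Coloring (Fin 2)) (hC6 : ¬ Contains (cycleGraph 6) G) :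
    ((univ : Finset (Finset (Fin n))).filter (IsQuad G C)).card ≤ (n - 2).choose 2 := by
  classical
  set Q := (univ : Finset (Finset (Fin n))).filter (IsQuad G C) with hQdef
  rcases Finset.eq_empty_or_nonempty Q with hQe | ⟨S0, hS0⟩
  · rw [hQe]; simp
  have hS0q : IsQuad G C S0 := (Finset.mem_filter.1 hS0).2
  obtain ⟨x, y, _, _, _, _, _, _, hxy, _, _, _, _, _⟩ := quad_rep hS0q
  have hxyne : x ≠ y := hxy
  have h1 : Q.card = ∑ b ∈ Q.image (Bk G C), (Q.filter (fun S => Bk G C S = b)).card :=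
    Finset.card_eq_sum_card_fiberwise (fun S hS => Finset.mem_image_of_mem _ hS)
  have h2 : ∀ b ∈ Q.image (Bk G C),
      (Q.filter (fun S => Bk G C S = b)).card ≤ ((b \ {x, y}).powersetCard 2).card := by
    intro b _
    refine le_trans (fiber_bound C b) ?_
    rw [Finset.card_powersetCard]
    apply Nat.choose_le_choose
    have hle := Finset.le_card_sdiff ({x, y} : Finset (Fin n)) b
    have : ({x, y} : Finset (Fin n)).card ≤ 2 := Finset.card_insert_le x {y}
    omega
  have hdisj : ∀ b ∈ Q.image (Bk G C), ∀ b' ∈ Q.image (Bk G C), b ≠ b' →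
      Disjoint ((b \ {x, y}).powersetCard 2) ((b' \ {x, y}).powersetCard 2) := by
    intro b hb b' hb' hbb'
    obtain ⟨S, hSQ, rfl⟩ := Finset.mem_image.1 hb
    obtain ⟨S', hS'Q, rfl⟩ := Finset.mem_image.1 hb'
    rw [Finset.disjoint_left]
    intro p hp hp'
    have hp1 := Finset.mem_powersetCard.1 hp
    have hp2 := Finset.mem_powersetCard.1 hp'
    have hpsub : p ⊆ Bk G C S ∩ Bk G C S' := by
      intro z hz
      exact Finset.mem_inter.2 ⟨(Finset.sdiff_subset) (hp1.1 hz), (Finset.sdiff_subset) (hp2.1 hz)⟩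
    have hcard := Finset.card_le_card hpsub
    rw [hp1.2] at hcard
    have := Bk_inter C hC6 (Finset.mem_filter.1 hSQ).2 (Finset.mem_filter.1 hS'Q).2 hbb'
    omega
  have h3 : ∑ b ∈ Q.image (Bk G C), ((b \ {x, y}).powersetCard 2).card =
      ((Q.image (Bk G C)).biUnion (fun b => (b \ {x, y}).powersetCard 2)).card :=
    (Finset.card_biUnion hdisj).symm
  have h4 : ((Q.image (Bk G C)).biUnion (fun b => (b \ {x, y}).powersetCard 2)).card ≤
      (((univ : Finset (Fin n)) \ {x, y}).powersetCard 2).card := by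
    apply Finset.card_le_card
    intro p hp
    obtain ⟨b, _, hpb⟩ := Finset.mem_biUnion.1 hp
    have hp1 := Finset.mem_powersetCard.1 hpb
    exact Finset.mem_powersetCard.2
      ⟨hp1.1.trans (Finset.sdiff_subset_sdiff (Finset.subset_univ b) le_rfl), hp1.2⟩
  have h5 : (((univ : Finset (Fin n)) \ {x, y}).powersetCard 2).card = (n - 2).choose 2 := by
    rw [Finset.card_powersetCard, Finset.card_sdiff_of_subset (Finset.subset_univ _),
      Finset.card_univ, Fintype.card_fin, Finset.card_pair hxyne]
  calc Q.card = _ := h1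
    _ ≤ _ := Finset.sum_le_sum h2
    _ = _ := h3
    _ ≤ _ := h4
    _ = _ := h5

end upper


/-- ex_bip(n, C₄, C₆) = (n-2 choose 2). -/
theorem ex_bip_C4_C6 (n : ℕ) (hn : 0 < n) :
    IsGreatest {k : ℕ | ∃ G : SimpleGraph (Fin n), G.Colorable 2 ∧
      ¬ Contains (cycleGraph 6) G ∧ _root_.copyCount (cycleGraph 4) G = k}
      ((n - 2).choose 2) := by
  classical
  constructor
  · refine ⟨K22g n, K22_colorable, K22_C6free, ?_⟩
    rw [copyCount_eq (G := K22g n) (C := K22col)]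
    by_cases hn2 : 2 ≤ n
    · exact K22_quadcount hn2
    · have hempty : (univ : Finset (Finset (Fin n))).filter (IsQuad (K22g n) K22col) = ∅ := by
        apply Finset.eq_empty_of_forall_notMem
        intro S hS
        have hq : IsQuad (K22g n) K22col S := (Finset.mem_filter.1 hS).2
        have h4 := quad_card hq
        have hle : S.card ≤ n := by
          have := Finset.card_le_card (Finset.subset_univ S)
          rwa [Finset.card_univ, Fintype.card_fin] at this
        omega
      rw [hempty]
      have : n = 1 := by omega
      subst this
      rfl
  · rintro k ⟨G, hcol, hC6, rfl⟩
    obtain ⟨C⟩ := hcol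
    rw [copyCount_eq (G := G) (C := C)]
    exact quads_le C hC6
end

section
/- The graph obtained from the complete bipartite graph K_{2,n-2} by adding one edge inside the part of size 2 and one edge inside the part of size n-2 contains no cycle of length 6 and contains exactly binom(n-2,2)+2 copies of C_4. -/
open SimpleGraph Finset

namespace KPlusAux
variable {m : ℕ}

abbrev V (m : ℕ) := Fin 2 ⊕ Fin m
def a0 : V m := Sum.inl 0
def a1 : V m := Sum.inl 1
def b0 (hm : 2 ≤ m) : V m := Sum.inr ⟨0, by omega⟩
def b1 (hm : 2 ≤ m) : V m := Sum.inr ⟨1, by omega⟩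
def G (m : ℕ) (hm : 2 ≤ m) : SimpleGraph (V m) :=
  completeBipartiteGraph (Fin 2) (Fin m) ⊔
    SimpleGraph.fromEdgeSet {s(a0, a1), s(b0 hm, b1 hm)}

lemma adj_ab (hm : 2 ≤ m) (i : Fin 2) (j : Fin m) : (G m hm).Adj (Sum.inl i) (Sum.inr j) :=
  Or.inl (by simp)
lemma adj_ba (hm : 2 ≤ m) (i : Fin 2) (j : Fin m) : (G m hm).Adj (Sum.inr j) (Sum.inl i) :=
  (adj_ab hm i j).symm
lemma adj_a01 (hm : 2 ≤ m) : (G m hm).Adj (a0 : V m) a1 :=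
  Or.inr ⟨by simp, by simp [a0, a1]⟩
lemma adj_b01 (hm : 2 ≤ m) : (G m hm).Adj (b0 hm) (b1 hm) :=
  Or.inr ⟨by simp, by simp [b0, b1, Fin.ext_iff]⟩

lemma exists_fin4 {P : Fin 4 → Prop} : (∃ t, P t) ↔ P 0 ∨ P 1 ∨ P 2 ∨ P 3 := by
  constructor
  · rintro ⟨t, h⟩; fin_cases t <;> tauto
  · rintro (h | h | h | h) <;> exact ⟨_, h⟩

/-- the 4-cycle subgraph spanned by `w 0, w 1, w 2, w 3` -/
def cyc (hm : 2 ≤ m) (w : Fin 4 → V m) : (G m hm).Subgraph where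
  verts := Set.range w
  Adj x y := (∃ i, (x = w i ∧ y = w (i + 1)) ∨ (y = w i ∧ x = w (i + 1))) ∧ (G m hm).Adj x y
  adj_sub h := h.2
  edge_vert := by rintro x y ⟨⟨i, ⟨rfl, rfl⟩ | ⟨rfl, rfl⟩⟩, -⟩; exacts [⟨i, rfl⟩, ⟨i + 1, rfl⟩]
  symm := ⟨by rintro x y ⟨⟨i, h⟩, h2⟩; exact ⟨⟨i, h.symm⟩, h2.symm⟩⟩

lemma cycle_adj_succ' {k : ℕ} (i : Fin (k + 3)) : (cycleGraph (k + 3)).Adj i (i + 1) := by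
  rw [cycleGraph_adj]
  right; simp

lemma C4_adj : ∀ i j : Fin 4, (cycleGraph 4).Adj i j ↔ (j = i + 1 ∨ i = j + 1) := by decide

lemma cyc_iso (hm : 2 ≤ m) (w : Fin 4 → V m) (hw : Function.Injective w)
    (hadj : ∀ i, (G m hm).Adj (w i) (w (i + 1))) :
    Nonempty ((cyc hm w).coe ≃g cycleGraph 4) := by
  have hbij : Function.Bijective (fun i : Fin 4 => (⟨w i, ⟨i, rfl⟩⟩ : (cyc hm w).verts)) := by
    constructor
    · intro i j h
      exact hw (congrArg Subtype.val h)
    · rintro ⟨x, i, rfl⟩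
      exact ⟨i, rfl⟩
  set eq := Equiv.ofBijective _ hbij with heq
  refine ⟨(RelIso.mk eq ?_ : cycleGraph 4 ≃g (cyc hm w).coe).symm⟩
  intro i j
  show (cyc hm w).Adj (w i) (w j) ↔ (cycleGraph 4).Adj i j
  rw [C4_adj]
  constructor
  · rintro ⟨⟨k, ⟨h1, h2⟩ | ⟨h1, h2⟩⟩, -⟩
    · exact Or.inl (by rw [hw h1, hw h2])
    · exact Or.inr (by rw [hw h1, hw h2])
  · rintro (rfl | rfl)
    · exact ⟨⟨i, Or.inl ⟨rfl, rfl⟩⟩, hadj i⟩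
    · exact ⟨⟨j, Or.inr ⟨rfl, rfl⟩⟩, (hadj j).symm⟩

end KPlusAux

namespace KPlusAux
variable {m : ℕ}

lemma cyc_rot (hm : 2 ≤ m) (w : Fin 4 → V m) (k : Fin 4) :
    cyc hm w = cyc hm (fun t => w (t + k)) := by
  refine Subgraph.ext ?_ ?_
  · ext x
    constructor
    · rintro ⟨i, rfl⟩; exact ⟨i - k, by simp⟩
    · rintro ⟨i, rfl⟩; exact ⟨i + k, rfl⟩
  · ext x y
    simp only [cyc]
    constructor
    · rintro ⟨⟨i, h⟩, h2⟩
      refine ⟨⟨i - k, ?_⟩, h2⟩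
      rwa [sub_add_cancel, sub_add_eq_add_sub, sub_add_cancel]
    · rintro ⟨⟨i, h⟩, h2⟩
      refine ⟨⟨i + k, ?_⟩, h2⟩
      rwa [add_right_comm] at h

lemma cyc_rev (hm : 2 ≤ m) (w : Fin 4 → V m) :
    cyc hm w = cyc hm (fun t => w (-t)) := by
  refine Subgraph.ext ?_ ?_
  · ext x
    constructor
    · rintro ⟨i, rfl⟩; exact ⟨-i, by simp⟩
    · rintro ⟨i, rfl⟩; exact ⟨-i, rfl⟩
  · ext x y
    simp only [cyc]
    constructor
    · rintro ⟨⟨i, h⟩, h2⟩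
      refine ⟨⟨-(i + 1), ?_⟩, h2⟩
      have e1 : (-(-(i + 1) + 1) : Fin 4) = i := by abel
      have e2 : (-(-(i + 1)) : Fin 4) = i + 1 := by abel
      rw [e1, e2]
      exact h.symm.imp And.symm And.symm
    · rintro ⟨⟨i, h⟩, h2⟩
      refine ⟨⟨-(i + 1), ?_⟩, h2⟩
      have e1 : (-(i + 1) + 1 : Fin 4) = -i := by abel
      rw [e1]
      exact h.symm.imp And.symm And.symm

lemma vec_ext (w : Fin 4 → V m) : w = ![w 0, w 1, w 2, w 3] := by
  funext t; fin_cases t <;> rfl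

lemma cyc_rot4 (hm : 2 ≤ m) (w : Fin 4 → V m) (k : Fin 4) :
    cyc hm w = cyc hm ![w k, w (k + 1), w (k + 2), w (k + 3)] := by
  rw [cyc_rot hm w k]
  congr 1
  funext t; fin_cases t <;> simp [add_comm]

lemma cyc_rev4 (hm : 2 ≤ m) (w : Fin 4 → V m) :
    cyc hm w = cyc hm ![w 0, w 3, w 2, w 1] := by
  rw [cyc_rev hm w]
  congr 1
  funext t; fin_cases t <;> rfl

end KPlusAux

namespace KPlusAux
variable {m : ℕ}

/-- complete bipartite subgraph between {a0,a1} and the pair p of B-vertices -/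
def bc (hm : 2 ≤ m) (p : Sym2 (Fin m)) : (G m hm).Subgraph where
  verts := {a0, a1} ∪ (Sum.inr '' {x | x ∈ p})
  Adj x y := ((x = a0 ∨ x = a1) ∧ ∃ j ∈ p, y = Sum.inr j) ∨
    ((y = a0 ∨ y = a1) ∧ ∃ j ∈ p, x = Sum.inr j)
  adj_sub := by
    rintro x y (⟨hx | hx, j, hj, rfl⟩ | ⟨hy | hy, j, hj, rfl⟩) <;>
      first
        | (subst hx; exact adj_ab hm _ _)
        | (subst hy; exact adj_ba hm _ _)
  edge_vert := by
    rintro x y (⟨hx, -⟩ | ⟨-, j, hj, rfl⟩)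
    · rcases hx with rfl | rfl <;> simp
    · exact Or.inr ⟨j, hj, rfl⟩
  symm := ⟨by rintro x y (h | h); exacts [Or.inr h, Or.inl h]⟩

def T1 (hm : 2 ≤ m) : (G m hm).Subgraph := cyc hm ![a0, a1, b0 hm, b1 hm]
def T2 (hm : 2 ≤ m) : (G m hm).Subgraph := cyc hm ![a0, a1, b1 hm, b0 hm]

lemma a0_ne_a1 : (a0 : V m) ≠ a1 := by simp [a0, a1]
lemma b0_ne_b1 (hm : 2 ≤ m) : b0 hm ≠ b1 hm := by simp [b0, b1, Fin.ext_iff]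
lemma a_ne_b (i : Fin 2) (j : Fin m) : (Sum.inl i : V m) ≠ Sum.inr j := by simp

lemma T1_inj (hm : 2 ≤ m) : Function.Injective ![a0, a1, b0 hm, b1 hm] := by
  intro x y h
  fin_cases x <;> fin_cases y <;>
    simp_all [a0, a1, b0, b1, Fin.ext_iff]
lemma T2_inj (hm : 2 ≤ m) : Function.Injective ![a0, a1, b1 hm, b0 hm] := by
  intro x y h
  fin_cases x <;> fin_cases y <;>
    simp_all [a0, a1, b0, b1, Fin.ext_iff]

lemma T1_adj (hm : 2 ≤ m) :
    ∀ i, (G m hm).Adj (![a0, a1, b0 hm, b1 hm] i) (![a0, a1, b0 hm, b1 hm] (i + 1)) := by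
  intro i
  fin_cases i <;> simp only [] <;>
    first
      | exact adj_a01 hm
      | exact adj_ab hm _ _
      | exact adj_b01 hm
      | exact adj_ba hm _ _
      | exact (adj_b01 hm).symm
lemma T2_adj (hm : 2 ≤ m) :
    ∀ i, (G m hm).Adj (![a0, a1, b1 hm, b0 hm] i) (![a0, a1, b1 hm, b0 hm] (i + 1)) := by
  intro i
  fin_cases i <;> simp only [] <;>
    first
      | exact adj_a01 hm
      | exact adj_ab hm _ _
      | exact adj_b01 hm
      | exact adj_ba hm _ _
      | exact (adj_b01 hm).symm

end KPlusAux

namespace KPlusAux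
variable {m : ℕ}

lemma fin4_cases : ∀ t : Fin 4, t = 0 ∨ t = 1 ∨ t = 2 ∨ t = 3 := by decide
lemma f4_01 : (0 + 1 : Fin 4) = 1 := rfl
lemma f4_12 : (1 + 1 : Fin 4) = 2 := rfl
lemma f4_23 : (2 + 1 : Fin 4) = 3 := rfl
lemma f4_30 : (3 + 1 : Fin 4) = 0 := rfl

set_option maxHeartbeats 800000 in
lemma cyc_eq_bc (hm : 2 ≤ m) (w : Fin 4 → V m) {j k : Fin m}
    (h0 : w 0 = a0 ∨ w 0 = a1) (h2 : w 2 = a0 ∨ w 2 = a1) (hne : w 0 ≠ w 2)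
    (h1 : w 1 = Sum.inr j) (h3 : w 3 = Sum.inr k) :
    cyc hm w = bc hm s(j, k) := by
  have hsetA : ∀ x : V m, (x = a0 ∨ x = a1) ↔ (x = w 0 ∨ x = w 2) := by
    intro x
    rcases h0 with h0 | h0 <;> rcases h2 with h2 | h2 <;> rw [h0, h2] <;>
      first
        | tauto
        | exact absurd (h0.trans h2.symm) hne
  have hsetB : ∀ y : V m, (∃ j' ∈ s(j, k), y = Sum.inr j') ↔ (y = w 1 ∨ y = w 3) := by
    intro y
    rw [h1, h3]
    constructor
    · rintro ⟨j', hj', rfl⟩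
      rcases Sym2.mem_iff.mp hj' with rfl | rfl
      exacts [Or.inl rfl, Or.inr rfl]
    · rintro (rfl | rfl)
      exacts [⟨j, by simp, rfl⟩, ⟨k, by simp, rfl⟩]
  refine Subgraph.ext ?_ ?_
  · ext x
    show x ∈ Set.range w ↔ x ∈ ({a0, a1} ∪ (Sum.inr '' {x | x ∈ s(j, k)}) : Set (V m))
    simp only [Set.mem_range, Set.mem_union, Set.mem_insert_iff, Set.mem_singleton_iff,
      Set.mem_image, Set.mem_setOf_eq]
    rw [exists_fin4]
    constructor
    · rintro (h | h | h | h)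
      · exact Or.inl ((hsetA x).mpr (Or.inl h.symm))
      · exact Or.inr ⟨j, by simp, by rw [← h, h1]⟩
      · exact Or.inl ((hsetA x).mpr (Or.inr h.symm))
      · exact Or.inr ⟨k, by simp, by rw [← h, h3]⟩
    · rintro (hx | ⟨j', hj', rfl⟩)
      · rcases (hsetA x).mp hx with h | h
        exacts [Or.inl h.symm, Or.inr (Or.inr (Or.inl h.symm))]
      · rcases Sym2.mem_iff.mp hj' with rfl | rfl
        · exact Or.inr (Or.inl h1)
        · exact Or.inr (Or.inr (Or.inr h3))
  · ext x y
    constructor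
    · rintro ⟨⟨t, ht⟩, -⟩
      have h8 : (x = w 0 ∧ y = w 1) ∨ (y = w 0 ∧ x = w 1) ∨ (x = w 1 ∧ y = w 2) ∨
          (y = w 1 ∧ x = w 2) ∨ (x = w 2 ∧ y = w 3) ∨ (y = w 2 ∧ x = w 3) ∨
          (x = w 3 ∧ y = w 0) ∨ (y = w 3 ∧ x = w 0) := by
        rcases fin4_cases t with rfl | rfl | rfl | rfl <;>
          simp only [f4_01, f4_12, f4_23, f4_30] at ht <;> rcases ht with h | h
        exacts [Or.inl h, Or.inr (Or.inl h), Or.inr (Or.inr (Or.inl h)),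
          Or.inr (Or.inr (Or.inr (Or.inl h))),
          Or.inr (Or.inr (Or.inr (Or.inr (Or.inl h)))),
          Or.inr (Or.inr (Or.inr (Or.inr (Or.inr (Or.inl h))))),
          Or.inr (Or.inr (Or.inr (Or.inr (Or.inr (Or.inr (Or.inl h)))))),
          Or.inr (Or.inr (Or.inr (Or.inr (Or.inr (Or.inr (Or.inr h))))))]
      show ((x = a0 ∨ x = a1) ∧ ∃ j' ∈ s(j, k), y = Sum.inr j') ∨
        ((y = a0 ∨ y = a1) ∧ ∃ j' ∈ s(j, k), x = Sum.inr j')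
      rw [hsetA x, hsetA y, hsetB x, hsetB y]
      rcases h8 with h | h | h | h | h | h | h | h
      exacts [Or.inl ⟨Or.inl h.1, Or.inl h.2⟩, Or.inr ⟨Or.inl h.1, Or.inl h.2⟩,
        Or.inr ⟨Or.inr h.2, Or.inl h.1⟩, Or.inl ⟨Or.inr h.2, Or.inl h.1⟩,
        Or.inl ⟨Or.inr h.1, Or.inr h.2⟩, Or.inr ⟨Or.inr h.1, Or.inr h.2⟩,
        Or.inr ⟨Or.inl h.2, Or.inr h.1⟩, Or.inl ⟨Or.inl h.2, Or.inr h.1⟩]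
    · intro hbc
      refine ⟨?_, (bc hm s(j, k)).adj_sub hbc⟩
      rw [exists_fin4]
      simp only [f4_01, f4_12, f4_23, f4_30]
      rcases hbc with ⟨hx, hy⟩ | ⟨hy, hx⟩
      · rw [hsetA x] at hx; rw [hsetB y] at hy
        rcases hx with hx | hx <;> rcases hy with hy | hy
        exacts [Or.inl (Or.inl ⟨hx, hy⟩),
          Or.inr (Or.inr (Or.inr (Or.inr ⟨hy, hx⟩))),
          Or.inr (Or.inl (Or.inr ⟨hy, hx⟩)),
          Or.inr (Or.inr (Or.inl (Or.inl ⟨hx, hy⟩)))]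
      · rw [hsetA y] at hy; rw [hsetB x] at hx
        rcases hy with hy | hy <;> rcases hx with hx | hx
        exacts [Or.inl (Or.inr ⟨hy, hx⟩),
          Or.inr (Or.inr (Or.inr (Or.inl ⟨hx, hy⟩))),
          Or.inr (Or.inl (Or.inl ⟨hx, hy⟩)),
          Or.inr (Or.inr (Or.inl (Or.inr ⟨hy, hx⟩)))]

end KPlusAux

namespace KPlusAux
variable {m : ℕ}

lemma cyc_vec_congr (hm : 2 ≤ m) {w w' : Fin 4 → V m} (h : ∀ t, w t = w' t) :
    cyc hm w = cyc hm w' := by congr 1; funext t; exact h t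

lemma cyc_eq_T (hm : 2 ≤ m) (w : Fin 4 → V m)
    (h0 : w 0 = a0 ∨ w 0 = a1) (h1 : w 1 = a0 ∨ w 1 = a1) (hne : w 0 ≠ w 1)
    (hB : (w 2 = b0 hm ∧ w 3 = b1 hm) ∨ (w 2 = b1 hm ∧ w 3 = b0 hm)) :
    cyc hm w = T1 hm ∨ cyc hm w = T2 hm := by
  have hw : cyc hm w = cyc hm ![w 0, w 1, w 2, w 3] := cyc_vec_congr hm (by
    intro t; rw [vec_ext w]; fin_cases t <;> rfl)
  have swap1 : cyc hm (![a1, a0, b0 hm, b1 hm] : Fin 4 → V m) = T2 hm := by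
    rw [cyc_rev4]
    have e1 : cyc hm ![(![a1, a0, b0 hm, b1 hm] : Fin 4 → V m) 0,
        (![a1, a0, b0 hm, b1 hm] : Fin 4 → V m) 3, (![a1, a0, b0 hm, b1 hm] : Fin 4 → V m) 2,
        (![a1, a0, b0 hm, b1 hm] : Fin 4 → V m) 1] =
        cyc hm (![a1, b1 hm, b0 hm, a0] : Fin 4 → V m) :=
      cyc_vec_congr hm (by intro t; fin_cases t <;> rfl)
    rw [e1, cyc_rot4 hm _ 3]
    exact cyc_vec_congr hm (by intro t; fin_cases t <;> rfl)
  have swap2 : cyc hm (![a1, a0, b1 hm, b0 hm] : Fin 4 → V m) = T1 hm := by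
    rw [cyc_rev4]
    have e1 : cyc hm ![(![a1, a0, b1 hm, b0 hm] : Fin 4 → V m) 0,
        (![a1, a0, b1 hm, b0 hm] : Fin 4 → V m) 3, (![a1, a0, b1 hm, b0 hm] : Fin 4 → V m) 2,
        (![a1, a0, b1 hm, b0 hm] : Fin 4 → V m) 1] =
        cyc hm (![a1, b0 hm, b1 hm, a0] : Fin 4 → V m) :=
      cyc_vec_congr hm (by intro t; fin_cases t <;> rfl)
    rw [e1, cyc_rot4 hm _ 3]
    exact cyc_vec_congr hm (by intro t; fin_cases t <;> rfl)
  rcases h0 with h0 | h0 <;> rcases h1 with h1 | h1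
  · exact absurd (h0.trans h1.symm) hne
  · rcases hB with ⟨hb2, hb3⟩ | ⟨hb2, hb3⟩
    · left; rw [hw, h0, h1, hb2, hb3]; rfl
    · right; rw [hw, h0, h1, hb2, hb3]; rfl
  · rcases hB with ⟨hb2, hb3⟩ | ⟨hb2, hb3⟩
    · right; rw [hw, h0, h1, hb2, hb3]; exact swap1
    · left; rw [hw, h0, h1, hb2, hb3]; exact swap2
  · exact absurd (h0.trans h1.symm) hne

end KPlusAux

namespace KPlusAux
variable {m : ℕ}

def code : V m → Fin 5
  | Sum.inl i => if i.val = 0 then 0 else 1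
  | Sum.inr j => if j.val = 0 then 2 else if j.val = 1 then 3 else 4

def R (x y : Fin 5) : Prop :=
  x ≤ 1 ∨ y ≤ 1 ∨ (x = 2 ∧ y = 3) ∨ (x = 3 ∧ y = 2)

instance : DecidableRel R := fun _ _ => by unfold R; infer_instance
instance (x y : Fin 5) : Decidable (R x y) := inferInstanceAs (Decidable (_ ∨ _))

lemma code_eq (hm : 2 ≤ m) {u v : V m} (h : code u = code v) (h4 : code u ≠ 4) : u = v := by
  cases u <;> cases v <;>
    simp only [code] at h h4 <;>
    split_ifs at h h4 <;>
    first
      | (exact absurd h (by decide))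
      | (congr 1; omega)

lemma adj_code (hm : 2 ≤ m) {u v : V m} (h : (G m hm).Adj u v) : R (code u) (code v) := by
  rcases h with h | h
  · rcases h with ⟨h1, h2⟩ | ⟨h1, h2⟩
    · cases u <;> cases v <;> simp_all [code, R] <;> split_ifs <;> simp
    · cases u <;> cases v <;> simp_all [code, R] <;> split_ifs <;> simp
  · rw [fromEdgeSet_adj] at h
    obtain ⟨h, hne⟩ := h
    simp only [Set.mem_insert_iff, Set.mem_singleton_iff, Sym2.eq_iff] at h
    rcases h with (⟨rfl, rfl⟩ | ⟨rfl, rfl⟩) | (⟨rfl, rfl⟩ | ⟨rfl, rfl⟩) <;>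
      simp [code, a0, a1, b0, b1, R]

lemma code_le1 {u : V m} (h : code u ≤ 1) : u = a0 ∨ u = a1 := by
  cases u with
  | inl i =>
    simp only [code] at h
    split_ifs at h with h0
    · exact Or.inl (by simp [a0]; exact Fin.ext h0)
    · exact Or.inr (by simp [a1]; exact Fin.ext (by omega))
  | inr j =>
    simp only [code] at h
    split_ifs at h <;> exact absurd h (by decide)

lemma code_two (hm : 2 ≤ m) {u : V m} (h : code u = 2) : u = b0 hm := by
  cases u with
  | inl i =>
    simp only [code] at h
    split_ifs at h <;> exact absurd h (by decide)
  | inr j =>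
    simp only [code] at h
    split_ifs at h with h0 h1
    · simp [b0]; exact Fin.ext h0
    · exact absurd h (by decide)
    · exact absurd h (by decide)

lemma code_three (hm : 2 ≤ m) {u : V m} (h : code u = 3) : u = b1 hm := by
  cases u with
  | inl i =>
    simp only [code] at h
    split_ifs at h <;> exact absurd h (by decide)
  | inr j =>
    simp only [code] at h
    split_ifs at h with h0 h1
    · exact absurd h (by decide)
    · simp [b1]; exact Fin.ext h1
    · exact absurd h (by decide)

lemma code_ge2 {u : V m} (h : 2 ≤ code u) : ∃ j, u = Sum.inr j := by
  cases u with
  | inl i =>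
    simp only [code] at h
    split_ifs at h <;> exact absurd h (by decide)
  | inr j => exact ⟨j, rfl⟩

set_option maxRecDepth 40000 in
set_option synthInstance.maxSize 4000 in
set_option synthInstance.maxHeartbeats 1000000 in
set_option maxHeartbeats 2000000 in
lemma classify : ∀ c0 c1 c2 c3 : Fin 5,
    ¬(R c0 c1 ∧ R c1 c2 ∧ R c2 c3 ∧ R c3 c0 ∧
      (c0 ≠ c1 ∨ c0 = 4) ∧ (c0 ≠ c2 ∨ c0 = 4) ∧ (c0 ≠ c3 ∨ c0 = 4) ∧
      (c1 ≠ c2 ∨ c1 = 4) ∧ (c1 ≠ c3 ∨ c1 = 4) ∧ (c2 ≠ c3 ∨ c2 = 4) ∧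
      ¬((c0 ≤ 1 ∧ c2 ≤ 1 ∧ 2 ≤ c1 ∧ 2 ≤ c3) ∨
        (c1 ≤ 1 ∧ c3 ≤ 1 ∧ 2 ≤ c0 ∧ 2 ≤ c2) ∨
        (c0 ≤ 1 ∧ c1 ≤ 1 ∧ ((c2 = 2 ∧ c3 = 3) ∨ (c2 = 3 ∧ c3 = 2))) ∨
        (c1 ≤ 1 ∧ c2 ≤ 1 ∧ ((c3 = 2 ∧ c0 = 3) ∨ (c3 = 3 ∧ c0 = 2))) ∨
        (c2 ≤ 1 ∧ c3 ≤ 1 ∧ ((c0 = 2 ∧ c1 = 3) ∨ (c0 = 3 ∧ c1 = 2))) ∨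
        (c3 ≤ 1 ∧ c0 ≤ 1 ∧ ((c1 = 2 ∧ c2 = 3) ∨ (c1 = 3 ∧ c2 = 2))))) := by
  decide

end KPlusAux

namespace KPlusAux
variable {m : ℕ}

def F (hm : 2 ≤ m) : ({p : Sym2 (Fin m) // ¬ p.IsDiag} ⊕ Fin 2) → (G m hm).Subgraph
  | Sum.inl p => bc hm p.1
  | Sum.inr i => if i = 0 then T1 hm else T2 hm

lemma F_T1 (hm : 2 ≤ m) : F hm (Sum.inr 0) = T1 hm := by simp [F]
lemma F_T2 (hm : 2 ≤ m) : F hm (Sum.inr 1) = T2 hm := by simp [F]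

lemma family1 (hm : 2 ≤ m) (w : Fin 4 → V m) (hw : Function.Injective w)
    (hc0 : code (w 0) ≤ 1) (hc2 : code (w 2) ≤ 1)
    (hc1 : 2 ≤ code (w 1)) (hc3 : 2 ≤ code (w 3)) :
    ∃ x, F hm x = cyc hm w := by
  obtain ⟨j, hj⟩ := code_ge2 hc1
  obtain ⟨k, hk⟩ := code_ge2 hc3
  have hjk : j ≠ k := by
    intro h
    exact hw.ne (show (1 : Fin 4) ≠ 3 by decide) (by rw [hj, hk, h])
  refine ⟨Sum.inl ⟨s(j, k), by simp [hjk]⟩, ?_⟩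
  exact (cyc_eq_bc hm w (code_le1 hc0) (code_le1 hc2) (hw.ne (by decide)) hj hk).symm

lemma family2 (hm : 2 ≤ m) (w : Fin 4 → V m) (hw : Function.Injective w)
    (hc0 : code (w 0) ≤ 1) (hc1 : code (w 1) ≤ 1)
    (hB : (code (w 2) = 2 ∧ code (w 3) = 3) ∨ (code (w 2) = 3 ∧ code (w 3) = 2)) :
    ∃ x, F hm x = cyc hm w := by
  have hB' : (w 2 = b0 hm ∧ w 3 = b1 hm) ∨ (w 2 = b1 hm ∧ w 3 = b0 hm) := by
    rcases hB with ⟨h2, h3⟩ | ⟨h2, h3⟩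
    · exact Or.inl ⟨code_two hm h2, code_three hm h3⟩
    · exact Or.inr ⟨code_three hm h2, code_two hm h3⟩
  rcases cyc_eq_T hm w (code_le1 hc0) (code_le1 hc1) (hw.ne (by decide)) hB' with h | h
  · exact ⟨Sum.inr 0, by rw [F_T1, h]⟩
  · exact ⟨Sum.inr 1, by rw [F_T2, h]⟩

lemma cyc_mem_range (hm : 2 ≤ m) (w : Fin 4 → V m) (hw : Function.Injective w)
    (hadj : ∀ i, (G m hm).Adj (w i) (w (i + 1))) : ∃ x, F hm x = cyc hm w := by
  have hR : ∀ i, R (code (w i)) (code (w (i + 1))) := fun i => adj_code hm (hadj i)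
  have hI : ∀ i j : Fin 4, i ≠ j → (code (w i) ≠ code (w j) ∨ code (w i) = 4) := by
    intro i j hij
    by_cases h : code (w i) = code (w j)
    · refine Or.inr (by_contra fun h4 => hij (hw (code_eq hm h h4)))
    · exact Or.inl h
  have hR3 : R (code (w 3)) (code (w 0)) := by have := hR 3; rwa [f4_30] at this
  have hD' : (code (w 0) ≤ 1 ∧ code (w 2) ≤ 1 ∧ 2 ≤ code (w 1) ∧ 2 ≤ code (w 3)) ∨
      (code (w 1) ≤ 1 ∧ code (w 3) ≤ 1 ∧ 2 ≤ code (w 0) ∧ 2 ≤ code (w 2)) ∨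
      (code (w 0) ≤ 1 ∧ code (w 1) ≤ 1 ∧
        ((code (w 2) = 2 ∧ code (w 3) = 3) ∨ (code (w 2) = 3 ∧ code (w 3) = 2))) ∨
      (code (w 1) ≤ 1 ∧ code (w 2) ≤ 1 ∧
        ((code (w 3) = 2 ∧ code (w 0) = 3) ∨ (code (w 3) = 3 ∧ code (w 0) = 2))) ∨
      (code (w 2) ≤ 1 ∧ code (w 3) ≤ 1 ∧
        ((code (w 0) = 2 ∧ code (w 1) = 3) ∨ (code (w 0) = 3 ∧ code (w 1) = 2))) ∨
      (code (w 3) ≤ 1 ∧ code (w 0) ≤ 1 ∧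
        ((code (w 1) = 2 ∧ code (w 2) = 3) ∨ (code (w 1) = 3 ∧ code (w 2) = 2))) := by
    by_contra hD2
    exact classify _ _ _ _ ⟨hR 0, hR 1, hR 2, hR3, hI 0 1 (by decide), hI 0 2 (by decide),
      hI 0 3 (by decide), hI 1 2 (by decide), hI 1 3 (by decide), hI 2 3 (by decide), hD2⟩
  have hrot : ∀ k : Fin 4, (∃ x, F hm x = cyc hm (fun t => w (t + k))) →
      ∃ x, F hm x = cyc hm w := by
    intro k ⟨x, hx⟩
    exact ⟨x, by rw [cyc_rot hm w k]; exact hx⟩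
  have hwrot : ∀ k : Fin 4, Function.Injective (fun t => w (t + k)) :=
    fun k => hw.comp (fun s t h => by simpa using congrArg (· - k) h)
  rcases hD' with ⟨h0, h2, h1, h3⟩ | ⟨h1, h3, h0, h2⟩ | ⟨h0, h1, hB⟩ |
    ⟨h1, h2, hB⟩ | ⟨h2, h3, hB⟩ | ⟨h3, h0, hB⟩
  · exact family1 hm w hw h0 h2 h1 h3
  · exact hrot 1 (family1 hm _ (hwrot 1) h1 h3 h2 h0)
  · exact family2 hm w hw h0 h1 hB
  · exact hrot 1 (family2 hm _ (hwrot 1) h1 h2 hB)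
  · exact hrot 2 (family2 hm _ (hwrot 2) h2 h3 hB)
  · exact hrot 3 (family2 hm _ (hwrot 3) h3 h0 hB)

end KPlusAux

namespace KPlusAux
variable {m : ℕ}

lemma C4_adj_succ : ∀ i : Fin 4, (cycleGraph 4).Adj i (i + 1) := by decide

lemma subgraph_eq_cyc (hm : 2 ≤ m) (G' : (G m hm).Subgraph)
    (e : G'.coe ≃g cycleGraph 4) :
    ∃ w : Fin 4 → V m, Function.Injective w ∧ (∀ i, (G m hm).Adj (w i) (w (i + 1))) ∧
      G' = cyc hm w := by
  set w : Fin 4 → V m := fun i => ((e.symm i : G'.verts) : V m) with hwdef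
  have hw : Function.Injective w := fun i j h =>
    e.symm.injective (Subtype.ext h)
  have hadjG' : ∀ i j : Fin 4, G'.Adj (w i) (w j) ↔ (cycleGraph 4).Adj i j := by
    intro i j
    have h1 : G'.coe.Adj (e.symm i) (e.symm j) ↔ (cycleGraph 4).Adj i j := by
      rw [← e.map_rel_iff]
      simp
    exact h1
  have hadj : ∀ i, (G m hm).Adj (w i) (w (i + 1)) :=
    fun i => G'.adj_sub ((hadjG' i (i + 1)).mpr (C4_adj_succ i))
  refine ⟨w, hw, hadj, Subgraph.ext ?_ ?_⟩
  · ext x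
    constructor
    · intro hx
      exact ⟨e ⟨x, hx⟩, congrArg Subtype.val (e.symm_apply_apply ⟨x, hx⟩)⟩
    · rintro ⟨i, rfl⟩
      exact (e.symm i).2
  · ext x y
    constructor
    · intro h
      have hx : x ∈ G'.verts := G'.edge_vert h
      have hy : y ∈ G'.verts := G'.edge_vert (G'.adj_symm h)
      set i := e ⟨x, hx⟩
      set j := e ⟨y, hy⟩
      have hxi : x = w i := (congrArg Subtype.val (e.symm_apply_apply ⟨x, hx⟩)).symm
      have hyj : y = w j := (congrArg Subtype.val (e.symm_apply_apply ⟨y, hy⟩)).symm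
      have hc4 : (cycleGraph 4).Adj i j := by
        rw [← hadjG' i j, ← hxi, ← hyj]; exact h
      refine ⟨?_, G'.adj_sub h⟩
      rcases (C4_adj i j).mp hc4 with hji | hij
      · exact ⟨i, Or.inl ⟨hxi, by rw [← hji]; exact hyj⟩⟩
      · exact ⟨j, Or.inr ⟨hyj, by rw [← hij]; exact hxi⟩⟩
    · rintro ⟨⟨i, ⟨rfl, rfl⟩ | ⟨rfl, rfl⟩⟩, -⟩
      · exact (hadjG' i (i + 1)).mpr (C4_adj_succ i)
      · exact G'.adj_symm ((hadjG' i (i + 1)).mpr (C4_adj_succ i))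

end KPlusAux

namespace KPlusAux
variable {m : ℕ}

lemma bc_eq_cyc (hm : 2 ≤ m) {j k : Fin m} (hjk : j ≠ k) :
    bc hm s(j, k) = cyc hm ![a0, Sum.inr j, a1, Sum.inr k] := by
  refine (cyc_eq_bc hm ![a0, Sum.inr j, a1, Sum.inr k] (Or.inl rfl) (Or.inr rfl) ?_ rfl rfl).symm
  exact a0_ne_a1

lemma bc_inj_vec (hm : 2 ≤ m) {j k : Fin m} (hjk : j ≠ k) :
    Function.Injective (![a0, Sum.inr j, a1, Sum.inr k] : Fin 4 → V m) := by
  intro x y h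
  fin_cases x <;> fin_cases y <;> simp_all [a0, a1, Fin.ext_iff] <;>
    first | rfl | (exact absurd h hjk) | (exact absurd h.symm hjk)

lemma bc_adj_vec (hm : 2 ≤ m) (j k : Fin m) :
    ∀ i, (G m hm).Adj ((![a0, Sum.inr j, a1, Sum.inr k] : Fin 4 → V m) i)
      (![a0, Sum.inr j, a1, Sum.inr k] (i + 1)) := by
  intro i
  fin_cases i <;> simp only [] <;>
    first | exact adj_ab hm _ _ | exact adj_ba hm _ _

lemma F_iso (hm : 2 ≤ m) (x : {p : Sym2 (Fin m) // ¬ p.IsDiag} ⊕ Fin 2) :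
    Nonempty ((F hm x).coe ≃g cycleGraph 4) := by
  rcases x with ⟨p, hp⟩ | i
  · show Nonempty ((bc hm p).coe ≃g cycleGraph 4)
    induction p using Sym2.ind with
    | _ j k =>
      have hjk : j ≠ k := by simpa using hp
      rw [bc_eq_cyc hm hjk]
      exact cyc_iso hm _ (bc_inj_vec hm hjk) (bc_adj_vec hm j k)
  · rcases Fin.exists_fin_two.mp ⟨i, rfl⟩ with rfl | rfl
    · rw [F_T1]; exact cyc_iso hm _ (T1_inj hm) (T1_adj hm)
    · rw [F_T2]; exact cyc_iso hm _ (T2_inj hm) (T2_adj hm)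

lemma bc_adj_iff (hm : 2 ≤ m) (p : Sym2 (Fin m)) (j : Fin m) :
    (bc hm p).Adj a0 (Sum.inr j) ↔ j ∈ p := by
  constructor
  · rintro (⟨-, j', hj', hj⟩ | ⟨ha | ha, -⟩)
    · obtain rfl : j = j' := by simpa using hj
      exact hj'
    · exact absurd ha.symm (a_ne_b 0 j)
    · exact absurd ha.symm (a_ne_b 1 j)
  · intro hj
    exact Or.inl ⟨Or.inl rfl, j, hj, rfl⟩

lemma bc_not_adj01 (hm : 2 ≤ m) (p : Sym2 (Fin m)) : ¬ (bc hm p).Adj a0 a1 := by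
  rintro (⟨-, j', -, hj⟩ | ⟨-, j', -, hj⟩)
  · exact absurd hj (a_ne_b 1 j')
  · exact absurd hj (a_ne_b 0 j')

lemma T1_adj01 (hm : 2 ≤ m) : (T1 hm).Adj a0 a1 := ⟨⟨0, Or.inl ⟨rfl, rfl⟩⟩, adj_a01 hm⟩
lemma T2_adj01 (hm : 2 ≤ m) : (T2 hm).Adj a0 a1 := ⟨⟨0, Or.inl ⟨rfl, rfl⟩⟩, adj_a01 hm⟩

lemma T1_adj_ab (hm : 2 ≤ m) : (T1 hm).Adj a1 (b0 hm) := ⟨⟨1, Or.inl ⟨rfl, rfl⟩⟩, adj_ab hm _ _⟩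

lemma T2_not_adj_ab (hm : 2 ≤ m) : ¬ (T2 hm).Adj a1 (b0 hm) := by
  rintro ⟨⟨t, ht⟩, -⟩
  rcases fin4_cases t with rfl | rfl | rfl | rfl <;>
    simp only [f4_01, f4_12, f4_23, f4_30] at ht <;>
    simp [a0, a1, b0, b1, Fin.ext_iff] at ht

lemma F_inj (hm : 2 ≤ m) : Function.Injective (F hm) := by
  intro x y h
  rcases x with ⟨p, hp⟩ | i <;> rcases y with ⟨q, hq⟩ | i'
  · have : bc hm p = bc hm q := h
    refine congrArg Sum.inl (Subtype.ext (Sym2.ext fun j => ?_))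
    rw [← bc_adj_iff hm p j, ← bc_adj_iff hm q j, this]
  · exfalso
    have h1 : (F hm (Sum.inr i')).Adj a0 a1 := by
      rcases Fin.exists_fin_two.mp ⟨i', rfl⟩ with rfl | rfl
      · rw [F_T1]; exact T1_adj01 hm
      · rw [F_T2]; exact T2_adj01 hm
    rw [← h] at h1
    exact bc_not_adj01 hm p h1
  · exfalso
    have h1 : (F hm (Sum.inr i)).Adj a0 a1 := by
      rcases Fin.exists_fin_two.mp ⟨i, rfl⟩ with rfl | rfl
      · rw [F_T1]; exact T1_adj01 hm
      · rw [F_T2]; exact T2_adj01 hm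
    rw [h] at h1
    exact bc_not_adj01 hm q h1
  · rcases Fin.exists_fin_two.mp ⟨i, rfl⟩ with rfl | rfl <;>
      rcases Fin.exists_fin_two.mp ⟨i', rfl⟩ with rfl | rfl
    · rfl
    · exfalso
      rw [F_T1, F_T2] at h
      exact T2_not_adj_ab hm (h ▸ T1_adj_ab hm)
    · exfalso
      rw [F_T1, F_T2] at h
      exact T2_not_adj_ab hm (h ▸ T1_adj_ab hm)
    · rfl

lemma set_eq (hm : 2 ≤ m) :
    {G' : (G m hm).Subgraph | Nonempty (G'.coe ≃g cycleGraph 4)} = Set.range (F hm) := by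
  ext G'
  constructor
  · rintro ⟨e⟩
    obtain ⟨w, hw, hadj, rfl⟩ := subgraph_eq_cyc hm G' e
    exact cyc_mem_range hm w hw hadj
  · rintro ⟨x, rfl⟩
    exact F_iso hm x

end KPlusAux


namespace KPlusAux
variable {m : ℕ}

set_option maxRecDepth 40000 in
set_option synthInstance.maxSize 4000 in
set_option synthInstance.maxHeartbeats 1000000 in
set_option maxHeartbeats 2000000 in
lemma noC6' : ∀ c0 c1 c2 c3 c4 c5 : Fin 5, ¬(R c0 c1 ∧ R c1 c2 ∧ R c2 c3 ∧ R c3 c4 ∧ R c4 c5 ∧ R c5 c0 ∧ (c0 ≠ c1 ∨ c0 = 4) ∧ (c0 ≠ c2 ∨ c0 = 4) ∧ (c0 ≠ c3 ∨ c0 = 4) ∧ (c0 ≠ c4 ∨ c0 = 4) ∧ (c0 ≠ c5 ∨ c0 = 4) ∧ (c1 ≠ c2 ∨ c1 = 4) ∧ (c1 ≠ c3 ∨ c1 = 4) ∧ (c1 ≠ c4 ∨ c1 = 4) ∧ (c1 ≠ c5 ∨ c1 = 4) ∧ (c2 ≠ c3 ∨ c2 = 4) ∧ (c2 ≠ c4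 ∨ c2 = 4) ∧ (c2 ≠ c5 ∨ c2 = 4) ∧ (c3 ≠ c4 ∨ c3 = 4) ∧ (c3 ≠ c5 ∨ c3 = 4) ∧ (c4 ≠ c5 ∨ c4 = 4)) := by decide


lemma part1 (hm : 2 ≤ m) : ¬ Contains (cycleGraph 6) (G m hm) := by
  rintro ⟨f, hf⟩
  have hA0 : R (code (f 0)) (code (f 1)) := adj_code hm (f.map_adj (by exact cycle_adj_succ' 0))
  have hA1 : R (code (f 1)) (code (f 2)) := adj_code hm (f.map_adj (by exact cycle_adj_succ' 1))
  have hA2 : R (code (f 2)) (code (f 3)) := adj_code hm (f.map_adj (by exact cycle_adj_succ' 2))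
  have hA3 : R (code (f 3)) (code (f 4)) := adj_code hm (f.map_adj (by exact cycle_adj_succ' 3))
  have hA4 : R (code (f 4)) (code (f 5)) := adj_code hm (f.map_adj (by exact cycle_adj_succ' 4))
  have hA5 : R (code (f 5)) (code (f 0)) := adj_code hm (f.map_adj (by exact cycle_adj_succ' 5))
  have hI01 : code (f 0) = code (f 1) → code (f 0) = 4 := fun h =>
    by_contra fun h4 => absurd (hf (code_eq hm h h4)) (by decide)
  have hI02 : code (f 0) = code (f 2) → code (f 0) = 4 := fun h =>
    by_contra fun h4 => absurd (hf (code_eq hm h h4)) (by decide)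
  have hI03 : code (f 0) = code (f 3) → code (f 0) = 4 := fun h =>
    by_contra fun h4 => absurd (hf (code_eq hm h h4)) (by decide)
  have hI04 : code (f 0) = code (f 4) → code (f 0) = 4 := fun h =>
    by_contra fun h4 => absurd (hf (code_eq hm h h4)) (by decide)
  have hI05 : code (f 0) = code (f 5) → code (f 0) = 4 := fun h =>
    by_contra fun h4 => absurd (hf (code_eq hm h h4)) (by decide)
  have hI12 : code (f 1) = code (f 2) → code (f 1) = 4 := fun h =>
    by_contra fun h4 => absurd (hf (code_eq hm h h4)) (by decide)
  have hI13 : code (f 1) = code (f 3) → code (f 1) = 4 := fun h =>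
    by_contra fun h4 => absurd (hf (code_eq hm h h4)) (by decide)
  have hI14 : code (f 1) = code (f 4) → code (f 1) = 4 := fun h =>
    by_contra fun h4 => absurd (hf (code_eq hm h h4)) (by decide)
  have hI15 : code (f 1) = code (f 5) → code (f 1) = 4 := fun h =>
    by_contra fun h4 => absurd (hf (code_eq hm h h4)) (by decide)
  have hI23 : code (f 2) = code (f 3) → code (f 2) = 4 := fun h =>
    by_contra fun h4 => absurd (hf (code_eq hm h h4)) (by decide)
  have hI24 : code (f 2) = code (f 4) → code (f 2) = 4 := fun h =>
    by_contra fun h4 => absurd (hf (code_eq hm h h4)) (by decide)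
  have hI25 : code (f 2) = code (f 5) → code (f 2) = 4 := fun h =>
    by_contra fun h4 => absurd (hf (code_eq hm h h4)) (by decide)
  have hI34 : code (f 3) = code (f 4) → code (f 3) = 4 := fun h =>
    by_contra fun h4 => absurd (hf (code_eq hm h h4)) (by decide)
  have hI35 : code (f 3) = code (f 5) → code (f 3) = 4 := fun h =>
    by_contra fun h4 => absurd (hf (code_eq hm h h4)) (by decide)
  have hI45 : code (f 4) = code (f 5) → code (f 4) = 4 := fun h =>
    by_contra fun h4 => absurd (hf (code_eq hm h h4)) (by decide)
  have hO01 : code (f 0) ≠ code (f 1) ∨ code (f 0) = 4 := if h : code (f 0) = code (f 1) then .inr (hI01 h) else .inl h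
  have hO02 : code (f 0) ≠ code (f 2) ∨ code (f 0) = 4 := if h : code (f 0) = code (f 2) then .inr (hI02 h) else .inl h
  have hO03 : code (f 0) ≠ code (f 3) ∨ code (f 0) = 4 := if h : code (f 0) = code (f 3) then .inr (hI03 h) else .inl h
  have hO04 : code (f 0) ≠ code (f 4) ∨ code (f 0) = 4 := if h : code (f 0) = code (f 4) then .inr (hI04 h) else .inl h
  have hO05 : code (f 0) ≠ code (f 5) ∨ code (f 0) = 4 := if h : code (f 0) = code (f 5) then .inr (hI05 h) else .inl h
  have hO12 : code (f 1) ≠ code (f 2) ∨ code (f 1) = 4 := if h : code (f 1) = code (f 2) then .inr (hI12 h) else .inl h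
  have hO13 : code (f 1) ≠ code (f 3) ∨ code (f 1) = 4 := if h : code (f 1) = code (f 3) then .inr (hI13 h) else .inl h
  have hO14 : code (f 1) ≠ code (f 4) ∨ code (f 1) = 4 := if h : code (f 1) = code (f 4) then .inr (hI14 h) else .inl h
  have hO15 : code (f 1) ≠ code (f 5) ∨ code (f 1) = 4 := if h : code (f 1) = code (f 5) then .inr (hI15 h) else .inl h
  have hO23 : code (f 2) ≠ code (f 3) ∨ code (f 2) = 4 := if h : code (f 2) = code (f 3) then .inr (hI23 h) else .inl h
  have hO24 : code (f 2) ≠ code (f 4) ∨ code (f 2) = 4 := if h : code (f 2) = code (f 4) then .inr (hI24 h) else .inl h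
  have hO25 : code (f 2) ≠ code (f 5) ∨ code (f 2) = 4 := if h : code (f 2) = code (f 5) then .inr (hI25 h) else .inl h
  have hO34 : code (f 3) ≠ code (f 4) ∨ code (f 3) = 4 := if h : code (f 3) = code (f 4) then .inr (hI34 h) else .inl h
  have hO35 : code (f 3) ≠ code (f 5) ∨ code (f 3) = 4 := if h : code (f 3) = code (f 5) then .inr (hI35 h) else .inl h
  have hO45 : code (f 4) ≠ code (f 5) ∨ code (f 4) = 4 := if h : code (f 4) = code (f 5) then .inr (hI45 h) else .inl h
  exact noC6' _ _ _ _ _ _ ⟨hA0, hA1, hA2, hA3, hA4, hA5, hO01, hO02, hO03, hO04, hO05, hO12, hO13, hO14, hO15, hO23, hO24, hO25, hO34, hO35, hO45⟩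


lemma part2 (hm : 2 ≤ m) : _root_.copyCount (cycleGraph 4) (G m hm) = m.choose 2 + 2 := by
  unfold _root_.copyCount
  rw [set_eq hm, ← Set.image_univ, Set.ncard_image_of_injective _ (F_inj hm), Set.ncard_univ,
    Nat.card_eq_fintype_card, Fintype.card_sum, Sym2.card_subtype_not_diag, Fintype.card_fin, Fintype.card_fin]

end KPlusAux

/-- K_{2,n-2} plus one edge in each part is C₆-free and has (n-2 choose 2)+2 copies of C₄. -/
theorem KPlus_C6_free_C4_count (n : ℕ) (hn : 4 ≤ n) :
    ¬ Contains (cycleGraph 6)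
      (completeBipartiteGraph (Fin 2) (Fin (n - 2)) ⊔
        SimpleGraph.fromEdgeSet
          {s(Sum.inl 0, Sum.inl 1),
           s(Sum.inr (⟨0, by omega⟩ : Fin (n - 2)), Sum.inr (⟨1, by omega⟩ : Fin (n - 2)))}) ∧
    _root_.copyCount (cycleGraph 4)
      (completeBipartiteGraph (Fin 2) (Fin (n - 2)) ⊔
        SimpleGraph.fromEdgeSet
          {s(Sum.inl 0, Sum.inl 1),
           s(Sum.inr (⟨0, by omega⟩ : Fin (n - 2)), Sum.inr (⟨1, by omega⟩ : Fin (n - 2)))}) =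
      (n - 2).choose 2 + 2 := by
  have hm : 2 ≤ n - 2 := by omega
  exact ⟨KPlusAux.part1 hm, KPlusAux.part2 hm⟩
end

section
/- In a C_6-free bipartite graph G, every copy of C_4 with vertices v_1 v_2 v_3 v_4 (in cyclic order) satisfies: either v_1 and v_3 are opposite vertices of no other 4-cycle in G, or v_2 and v_4 are opposite vertices of no other 4-cycle in G. -/
open SimpleGraph Finset

lemma contains_c6 {V : Type*} (G : SimpleGraph V) (a b c d e f : V)
    (hab : a ≠ b) (hac : a ≠ c) (had : a ≠ d) (hae : a ≠ e) (haf : a ≠ f)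
    (hbc : b ≠ c) (hbd : b ≠ d) (hbe : b ≠ e) (hbf : b ≠ f)
    (hcd : c ≠ d) (hce : c ≠ e) (hcf : c ≠ f)
    (hde : d ≠ e) (hdf : d ≠ f) (hef : e ≠ f)
    (e1 : G.Adj a b) (e2 : G.Adj b c) (e3 : G.Adj c d)
    (e4 : G.Adj d e) (e5 : G.Adj e f) (e6 : G.Adj f a) :
    Contains (cycleGraph 6) G := by
  refine ⟨⟨![a, b, c, d, e, f], ?_⟩, ?_⟩
  · intro i j hij
    fin_cases i <;> fin_cases j <;>
      first
        | exact absurd hij (by decide)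
        | exact e1 | exact e1.symm | exact e2 | exact e2.symm
        | exact e3 | exact e3.symm | exact e4 | exact e4.symm
        | exact e5 | exact e5.symm | exact e6 | exact e6.symm
  · intro i j hij
    fin_cases i <;> fin_cases j <;>
      first
        | rfl
        | exact absurd hij (by assumption)
        | exact absurd hij.symm (by assumption)

lemma pick_other {V : Type*} (u u' a b : V) (huu' : u ≠ u')
    (hne : ({u, u'} : Set V) ≠ {a, b}) :
    (u ≠ a ∧ u ≠ b) ∨ (u' ≠ a ∧ u' ≠ b) := by
  by_contra h
  push_neg at h
  obtain ⟨h1, h2⟩ := h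
  apply hne
  by_cases hua : u = a
  · have hu'a : u' ≠ a := fun hh => huu' (hua.trans hh.symm)
    have := h2 hu'a
    subst hua this
    rfl
  · have hub : u = b := h1 hua
    by_cases hu'a : u' = a
    · subst hub hu'a
      exact Set.pair_comm _ _
    · exact absurd (h2 hu'a) (fun hh => huu' (hub.trans hh.symm))

theorem unique_opposite_pair {V : Type*} (G : SimpleGraph V)
    (hbip : G.Colorable 2) (hfree : ¬ Contains (cycleGraph 6) G)
    (v₁ v₂ v₃ v₄ : V) (h12 : v₁ ≠ v₃) (h24 : v₂ ≠ v₄)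
    (e1 : G.Adj v₁ v₂) (e2 : G.Adj v₂ v₃) (e3 : G.Adj v₃ v₄) (e4 : G.Adj v₄ v₁) :
    (∀ u u' : V, u ≠ u' → G.Adj v₁ u → G.Adj u v₃ → G.Adj v₃ u' → G.Adj u' v₁ →
      ({u, u'} : Set V) = {v₂, v₄}) ∨
    (∀ u u' : V, u ≠ u' → G.Adj v₂ u → G.Adj u v₄ → G.Adj v₄ u' → G.Adj u' v₂ →
      ({u, u'} : Set V) = {v₁, v₃}) := by
  by_contra hcon
  push_neg at hcon
  obtain ⟨⟨u, u', huu', hu1, hu3, hu'3, hu'1, hne1⟩,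
    ⟨w, w', hww', hw2, hw4, hw'4, hw'2, hne2⟩⟩ := hcon
  obtain ⟨x, hx1, hx3, hx2, hx4⟩ :
      ∃ x, G.Adj v₁ x ∧ G.Adj x v₃ ∧ x ≠ v₂ ∧ x ≠ v₄ := by
    rcases pick_other u u' v₂ v₄ huu' hne1 with ⟨h1, h2⟩ | ⟨h1, h2⟩
    · exact ⟨u, hu1, hu3, h1, h2⟩
    · exact ⟨u', hu'1.symm, hu'3.symm, h1, h2⟩
  obtain ⟨y, hy2, hy4, hy1, hy3⟩ :
      ∃ y, G.Adj v₂ y ∧ G.Adj y v₄ ∧ y ≠ v₁ ∧ y ≠ v₃ := by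
    rcases pick_other w w' v₁ v₃ hww' hne2 with ⟨h1, h2⟩ | ⟨h1, h2⟩
    · exact ⟨w, hw2, hw4, h1, h2⟩
    · exact ⟨w', hw'2.symm, hw'4.symm, h1, h2⟩
  obtain ⟨C⟩ := hbip
  have hxy : x ≠ y := by
    intro h
    subst h
    have c1 : C v₁ ≠ C v₂ := C.valid e1
    have c2 : C v₁ ≠ C x := C.valid hx1
    have c3 : C v₂ ≠ C x := C.valid hy2
    have : ∀ p q r : Fin 2, p ≠ r → q ≠ r → p = q := by decide
    exact c1 (this _ _ _ c2 c3)
  exact hfree (contains_c6 G v₁ x v₃ v₂ y v₄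
    hx1.ne h12 e1.ne hy1.symm e4.ne'
    hx3.ne hx2 hxy hx4
    e2.ne' hy3.symm e3.ne
    hy2.ne h24
    hy4.ne
    hx1 hx3 e2.symm hy2 hy4 e4)
end

section
/- In a graph G with no cycle of length 2s+2 (s >= 2), if K is a copy of K_{s,s} with classes A and B such that there exist a vertex a outside K adjacent to all of B and a vertex b outside K adjacent to all of A, then a = b; consequently K together with this vertex forms a copy of K_{s,s}+K_1. -/
open SimpleGraph Finset

theorem covering_vertices_equal {V : Type*} [DecidableEq V] (s : ℕ) (hs : 2 ≤ s)
    (G : SimpleGraph V) (hfree : ¬ Contains (cycleGraph (2 * s + 2)) G)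
    (A B : Finset V) (hA : A.card = s) (hB : B.card = s) (hAB : Disjoint A B)
    (hK : ∀ x ∈ A, ∀ y ∈ B, G.Adj x y)
    (a b : V) (ha : a ∉ A ∪ B) (hb : b ∉ A ∪ B)
    (haB : ∀ y ∈ B, G.Adj a y) (hbA : ∀ x ∈ A, G.Adj b x) :
    a = b ∧ ∀ u ∈ A ∪ B, G.Adj a u := by
  have hab : a = b := by
    by_contra hab
    -- enumerations of A and B
    set xF : Fin s → V := fun i => ((A.equivFin.symm (Fin.cast hA.symm i)) : V) with hxF
    set yF : Fin s → V := fun i => ((B.equivFin.symm (Fin.cast hB.symm i)) : V) with hyF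
    have hxFmem : ∀ i, xF i ∈ A := fun i => Finset.coe_mem _
    have hyFmem : ∀ i, yF i ∈ B := fun i => Finset.coe_mem _
    have hxFinj : Function.Injective xF := by
      intro i j h
      have := Subtype.val_injective h
      have := A.equivFin.symm.injective this
      simpa [Fin.ext_iff] using congrArg Fin.val this
    have hyFinj : Function.Injective yF := by
      intro i j h
      have := Subtype.val_injective h
      have := B.equivFin.symm.injective this
      simpa [Fin.ext_iff] using congrArg Fin.val this
    set x : ℕ → V := fun k => if h : k < s then xF ⟨k, h⟩ else a with hx
    set y : ℕ → V := fun k => if h : k < s then yF ⟨k, h⟩ else a with hy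
    have hxmem : ∀ k, k < s → x k ∈ A := by intro k hk; simp [hx, hk, hxFmem]
    have hymem : ∀ k, k < s → y k ∈ B := by intro k hk; simp [hy, hk, hyFmem]
    have hxinj : ∀ k, k < s → ∀ l, l < s → x k = x l → k = l := by
      intro k hk l hl h
      simp only [hx, dif_pos hk, dif_pos hl] at h
      simpa [Fin.ext_iff] using congrArg Fin.val (hxFinj h)
    have hyinj : ∀ k, k < s → ∀ l, l < s → y k = y l → k = l := by
      intro k hk l hl h
      simp only [hy, dif_pos hk, dif_pos hl] at h
      simpa [Fin.ext_iff] using congrArg Fin.val (hyFinj h)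
    -- the cyclic sequence
    set g : ℕ → V := fun i =>
      if i = 0 then a else if i = 3 then b else
        if Even i then x (i / 2 - 1) else y (i / 2 - 1) with hg
    have hg0 : g 0 = a := by simp [hg]
    have hg3 : g 3 = b := by simp [hg]
    have hgeven : ∀ i, i ≠ 0 → Even i → g i = x (i / 2 - 1) := by
      intro i h0 he
      have h3 : i ≠ 3 := by rintro rfl; exact (by decide : ¬ Even 3) he
      simp [hg, h0, h3, he]
    have hgodd : ∀ i, i ≠ 3 → ¬ Even i → g i = y (i / 2 - 1) := by
      intro i h3 he
      have h0 : i ≠ 0 := by rintro rfl; exact he (by decide)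
      simp [hg, h0, h3, he]
    -- membership classification
    have hgA : ∀ i, i ≠ 0 → Even i → i < 2 * s + 2 → g i ∈ A := by
      intro i h0 he hi
      rw [hgeven i h0 he]
      apply hxmem
      obtain ⟨m, hm⟩ := he
      omega
    have hgB : ∀ i, i ≠ 3 → ¬ Even i → i < 2 * s + 2 → g i ∈ B := by
      intro i h3 he hi
      rw [hgodd i h3 he]
      apply hymem
      rw [Nat.not_even_iff] at he
      omega
    -- adjacency along the cycle
    have hstep : ∀ k, k < 2 * s + 1 → G.Adj (g k) (g (k + 1)) := by
      intro k hk
      rcases Nat.lt_or_ge k 4 with h4 | h4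
      · interval_cases k
        · rw [hg0, hgodd 1 (by omega) (by decide)]
          exact haB _ (hymem 0 (by omega))
        · rw [hgodd 1 (by omega) (by decide), hgeven 2 (by omega) (by decide)]
          exact (hK _ (hxmem 0 (by omega)) _ (hymem 0 (by omega))).symm
        · rw [hgeven 2 (by omega) (by decide), hg3]
          exact (hbA _ (hxmem 0 (by omega))).symm
        · rw [hg3, hgeven 4 (by omega) (by decide)]
          exact hbA _ (hxmem 1 (by omega))
      · rcases Nat.even_or_odd k with he | ho
        · obtain ⟨m, hm⟩ := he
          have hke : Even k := ⟨m, hm⟩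
          have hkodd : ¬ Even (k + 1) := by rw [Nat.not_even_iff]; omega
          rw [hgeven k (by omega) hke, hgodd (k + 1) (by omega) hkodd]
          have h1 : (k + 1) / 2 - 1 = k / 2 - 1 := by omega
          rw [h1]
          exact hK _ (hxmem _ (by omega)) _ (hymem _ (by omega))
        · obtain ⟨m, hm⟩ := ho
          have hke : Even (k + 1) := ⟨m + 1, by omega⟩
          have hko : ¬ Even k := by rw [Nat.not_even_iff]; omega
          rw [hgodd k (by omega) hko, hgeven (k + 1) (by omega) hke]
          exact (hK _ (hxmem _ (by omega)) _ (hymem _ (by omega))).symm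
    have hlast : G.Adj (g (2 * s + 1)) (g 0) := by
      rw [hg0, hgodd (2 * s + 1) (by omega) (by rw [Nat.not_even_iff]; omega)]
      exact (haB _ (hymem _ (by omega))).symm
    -- injectivity on [0, 2s+2)
    have hginj : ∀ m, m < 2 * s + 2 → ∀ n, n < 2 * s + 2 → g m = g n → m = n := by
      have hclass : ∀ i, i = 0 ∨ i = 3 ∨ (i ≠ 0 ∧ Even i) ∨ (i ≠ 3 ∧ ¬ Even i) := by
        intro i
        rcases Nat.even_or_odd i with he | ho
        · rcases Nat.eq_zero_or_pos i with h | h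
          · exact Or.inl h
          · exact Or.inr (Or.inr (Or.inl ⟨by omega, he⟩))
        · rcases eq_or_ne i 3 with h | h
          · exact Or.inr (Or.inl h)
          · exact Or.inr (Or.inr (Or.inr ⟨h, Nat.not_even_iff_odd.mpr ho⟩))
      intro m hm n hn hEq
      have haA : a ∉ A := fun h => ha (Finset.mem_union_left _ h)
      have haBm : a ∉ B := fun h => ha (Finset.mem_union_right _ h)
      have hbAm : b ∉ A := fun h => hb (Finset.mem_union_left _ h)
      have hbBm : b ∉ B := fun h => hb (Finset.mem_union_right _ h)
      rcases hclass m with rfl | rfl | ⟨hm0, hme⟩ | ⟨hm3, hmo⟩ <;>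
        rcases hclass n with rfl | rfl | ⟨hn0, hne⟩ | ⟨hn3, hno⟩
      · rfl
      · rw [hg0, hg3] at hEq; exact absurd hEq hab
      · rw [hg0] at hEq; exact absurd (hEq ▸ hgA n hn0 hne hn) haA
      · rw [hg0] at hEq; exact absurd (hEq ▸ hgB n hn3 hno hn) haBm
      · rw [hg3, hg0] at hEq; exact absurd hEq.symm hab
      · rfl
      · rw [hg3] at hEq; exact absurd (hEq ▸ hgA n hn0 hne hn) hbAm
      · rw [hg3] at hEq; exact absurd (hEq ▸ hgB n hn3 hno hn) hbBm
      · rw [hg0] at hEq; exact absurd (hEq ▸ hgA m hm0 hme hm) haA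
      · rw [hg3] at hEq; exact absurd (hEq ▸ hgA m hm0 hme hm) hbAm
      · -- both even
        rw [hgeven m hm0 hme, hgeven n hn0 hne] at hEq
        obtain ⟨p, hp⟩ := hme; obtain ⟨q, hq⟩ := hne
        have := hxinj _ (by omega) _ (by omega) hEq
        omega
      · -- even vs odd
        exfalso
        have h1 := hgA m hm0 hme hm
        have h2 := hgB n hn3 hno hn
        rw [hEq] at h1
        exact hAB.forall_ne_finset h1 h2 rfl
      · rw [hg0] at hEq; exact absurd (hEq ▸ hgB m hm3 hmo hm) haBm
      · rw [hg3] at hEq; exact absurd (hEq ▸ hgB m hm3 hmo hm) hbBm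
      · -- odd vs even
        exfalso
        have h1 := hgA n hn0 hne hn
        have h2 := hgB m hm3 hmo hm
        rw [hEq] at h2
        exact hAB.forall_ne_finset h1 h2 rfl
      · -- both odd
        rw [hgodd m hm3 hmo, hgodd n hn3 hno] at hEq
        rw [Nat.not_even_iff] at hmo hno
        have := hyinj _ (by omega) _ (by omega) hEq
        omega
    -- build the homomorphism
    have hn2 : (2 : ℕ) ≤ 2 * s + 2 := by omega
    have hadjstep : ∀ u v : Fin (2 * s + 2), (v - u).val = 1 → G.Adj (g u.val) (g v.val) := by
      intro u v hvu
      rw [Fin.sub_def] at hvu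
      simp only at hvu
      have hu := u.isLt
      have hv := v.isLt
      rcases Nat.lt_or_ge (2 * s + 2 - u.val + v.val) (2 * s + 2) with h | h
      · rw [Nat.mod_eq_of_lt h] at hvu
        have h1 : u.val = 2 * s + 1 ∧ v.val = 0 := by omega
        rw [h1.1, h1.2]; exact hlast
      · rw [Nat.mod_eq_sub_mod h, Nat.mod_eq_of_lt (by omega)] at hvu
        have h1 : v.val = u.val + 1 := by omega
        rw [h1]; exact hstep _ (by omega)
    have hcont : Contains (cycleGraph (2 * s + 2)) G := by
      refine ⟨⟨fun i => g i.val, ?_⟩, ?_⟩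
      · intro u v huv
        rw [cycleGraph_adj'] at huv
        rcases huv with h | h
        · exact (hadjstep v u h).symm
        · exact hadjstep u v h
      · intro u v huv
        exact Fin.ext (hginj _ u.isLt _ v.isLt huv)
    exact hfree hcont
  refine ⟨hab, fun u hu => ?_⟩
  rcases Finset.mem_union.mp hu with h | h
  · rw [hab]; exact hbA u h
  · exact haB u h
end

section
/- The join of K_{s,s} with a single vertex (K_{s,s}+K_1) contains cycles of every length l for 3 <= l <= 2s+1. -/
open SimpleGraph Finset

/-- The join of K_{s,s} with a single vertex. -/
def KssJoinK1 (s : ℕ) : SimpleGraph (Option (Fin s ⊕ Fin s)) :=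
  SimpleGraph.fromRel
    (fun x y => x = none ∨ ∃ a b, x = some (Sum.inl a) ∧ y = some (Sum.inr b))

lemma adj_none_some {s : ℕ} (x : Fin s ⊕ Fin s) : (KssJoinK1 s).Adj none (some x) := by
  rw [KssJoinK1, SimpleGraph.fromRel_adj]
  exact ⟨by simp, Or.inl (Or.inl rfl)⟩

lemma adj_inl_inr {s : ℕ} (a b : Fin s) :
    (KssJoinK1 s).Adj (some (Sum.inl a)) (some (Sum.inr b)) := by
  rw [KssJoinK1, SimpleGraph.fromRel_adj]
  exact ⟨by simp, Or.inl (Or.inr ⟨a, b, rfl, rfl⟩)⟩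

lemma cycle_adj_cases {l : ℕ} {u v : Fin l} (h : (cycleGraph l).Adj u v) :
    v.val = u.val + 1 ∨ u.val = v.val + 1 ∨ (u.val = 0 ∧ v.val + 1 = l) ∨
      (v.val = 0 ∧ u.val + 1 = l) := by
  rw [cycleGraph_adj'] at h
  have hu := u.isLt; have hv := v.isLt
  have hmod : ∀ x : ℕ, 0 < x → x < 2 * l → x % l = 1 → x = 1 ∨ x = l + 1 := by
    intro x hx0 hx2 hx1
    rcases Nat.lt_or_ge x l with h1 | h1
    · left; rwa [Nat.mod_eq_of_lt h1] at hx1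
    · right; rw [Nat.mod_eq_sub_mod h1, Nat.mod_eq_of_lt (by omega)] at hx1; omega
  have hs1 : (u - v).val = ((l - v.val) + u.val) % l := by rw [Fin.sub_def]
  have hs2 : (v - u).val = ((l - u.val) + v.val) % l := by rw [Fin.sub_def]
  rcases h with h | h
  · rw [hs1] at h
    rcases hmod _ (by omega) (by omega) h with h' | h' <;> omega
  · rw [hs2] at h
    rcases hmod _ (by omega) (by omega) h with h' | h' <;> omega

/-- Embedding of an even cycle of length `m+m` alternating between the two sides. -/
def fE (s m : ℕ) (hms : m ≤ s) (i : Fin (m + m)) : Option (Fin s ⊕ Fin s) :=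
  if i.val % 2 = 0 then some (Sum.inl ⟨i.val / 2, by have := i.isLt; omega⟩)
  else some (Sum.inr ⟨i.val / 2, by have := i.isLt; omega⟩)

lemma fE_inj {s m : ℕ} (hms : m ≤ s) : Function.Injective (fE s m hms) := by
  intro i j hij
  apply Fin.ext
  unfold fE at hij
  split_ifs at hij with h1 h2 h3
  all_goals simp only [Option.some.injEq, Sum.inl.injEq, Sum.inr.injEq, Fin.mk.injEq] at hij
  all_goals try omega
  all_goals exact absurd hij (by simp)

lemma fE_step {s m : ℕ} (hms : m ≤ s) {u v : Fin (m + m)} (h : v.val = u.val + 1) :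
    (KssJoinK1 s).Adj (fE s m hms u) (fE s m hms v) := by
  unfold fE
  by_cases hp : u.val % 2 = 0
  · rw [if_pos hp, if_neg (by omega)]
    exact adj_inl_inr _ _
  · rw [if_neg hp, if_pos (by omega)]
    exact (adj_inl_inr _ _).symm

lemma fE_wrap {s m : ℕ} (hms : m ≤ s) {u v : Fin (m + m)}
    (h1 : v.val = 0) (h2 : u.val + 1 = m + m) (hm : 1 ≤ m) :
    (KssJoinK1 s).Adj (fE s m hms u) (fE s m hms v) := by
  unfold fE
  rw [if_neg (by omega), if_pos (by omega)]
  exact (adj_inl_inr _ _).symm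

/-- Embedding of an odd cycle of length `2m+1` using the apex vertex. -/
def fO (s m : ℕ) (hms : m ≤ s) (i : Fin (2 * m + 1)) : Option (Fin s ⊕ Fin s) :=
  if h : i.val = 0 then none
  else if i.val % 2 = 1 then some (Sum.inl ⟨(i.val - 1) / 2, by have := i.isLt; omega⟩)
  else some (Sum.inr ⟨(i.val - 1) / 2, by have := i.isLt; omega⟩)

lemma fO_inj {s m : ℕ} (hms : m ≤ s) : Function.Injective (fO s m hms) := by
  intro i j hij
  apply Fin.ext
  unfold fO at hij
  split_ifs at hij with h1 h2 h3 h4 h5 h6 h7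
  all_goals simp only [Option.some.injEq, Sum.inl.injEq, Sum.inr.injEq, Fin.mk.injEq] at hij
  all_goals try omega
  all_goals exact absurd hij (by simp)

lemma fO_step {s m : ℕ} (hms : m ≤ s) {u v : Fin (2 * m + 1)} (h : v.val = u.val + 1) :
    (KssJoinK1 s).Adj (fO s m hms u) (fO s m hms v) := by
  unfold fO
  by_cases h0 : u.val = 0
  · rw [dif_pos h0, dif_neg (by omega)]
    split_ifs <;> exact adj_none_some _
  · rw [dif_neg h0, dif_neg (by omega)]
    by_cases hp : u.val % 2 = 1
    · rw [if_pos hp, if_neg (by omega)]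
      exact adj_inl_inr _ _
    · rw [if_neg hp, if_pos (by omega)]
      exact (adj_inl_inr _ _).symm

lemma fO_wrap {s m : ℕ} (hms : m ≤ s) {u v : Fin (2 * m + 1)}
    (h1 : v.val = 0) (h2 : u.val + 1 = 2 * m + 1) (hm : 1 ≤ m) :
    (KssJoinK1 s).Adj (fO s m hms u) (fO s m hms v) := by
  unfold fO
  rw [dif_neg (by omega), dif_pos h1, if_neg (by omega)]
  exact (adj_none_some _).symm

theorem KssJoinK1_pancyclic (s : ℕ) (hs : 1 ≤ s) :
    ∀ l : ℕ, 3 ≤ l → l ≤ 2 * s + 1 → Contains (cycleGraph l) (KssJoinK1 s) := by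
  intro l hl3 hlu
  rcases Nat.even_or_odd l with ⟨m, hm⟩ | ⟨m, hm⟩ <;> subst hm
  · have hms : m ≤ s := by omega
    refine ⟨⟨fE s m hms, ?_⟩, fE_inj hms⟩
    intro u v h
    rcases cycle_adj_cases h with h1 | h1 | ⟨h1, h2⟩ | ⟨h1, h2⟩
    · exact fE_step hms h1
    · exact (fE_step hms h1).symm
    · exact (fE_wrap hms h1 h2 (by omega)).symm
    · exact fE_wrap hms h1 h2 (by omega)
  · have hms : m ≤ s := by omega
    refine ⟨⟨fO s m hms, ?_⟩, fO_inj hms⟩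
    intro u v h
    rcases cycle_adj_cases h with h1 | h1 | ⟨h1, h2⟩ | ⟨h1, h2⟩
    · exact fO_step hms h1
    · exact (fO_step hms h1).symm
    · exact (fO_wrap hms h1 h2 (by omega)).symm
    · exact fO_wrap hms h1 h2 (by omega)
end
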